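/- arXiv:1104.1069 — 2 statements merged into one kernel-verified Lean document; each statement's English description precedes it below -/
import Mathlib

section
/- There is a dimensional constant c = c(n) such that for every b ∈ BMO on ℝⁿ, every nonnegative locally integrable function f, and every cube Q with sides parallel to the axes, (1/|Q|) ∫_Q |b(y) − b_Q| f(y) dy ≤ c · ‖b‖_{BMO} · ‖f‖_{L log L, Q}. -/
open MeasureTheory ENNReal Set

noncomputable section

/-- An axis-parallel closed cube in `ℝⁿ`, given by its center and (positive) half side length. -/
structure Cube (n : ℕ) where
  center : Fin n → ℝ
  half : ℝ
  half_pos : 0 < half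

/-- The set of points of a cube. -/
def Cube.set {n : ℕ} (Q : Cube n) : Set (Fin n → ℝ) :=
  {y | ∀ i, |y i - Q.center i| ≤ Q.half}

variable {n : ℕ}

/-- Maximal operator acting on `ℝ≥0∞`-valued functions. -/
def maximalE (g : (Fin n → ℝ) → ℝ≥0∞) (x : Fin n → ℝ) : ℝ≥0∞ :=
  ⨆ (Q : Cube n) (_ : x ∈ Q.set), (volume Q.set)⁻¹ * ∫⁻ y in Q.set, g y

/-- The Hardy–Littlewood maximal operator. -/
def maximal (f : (Fin n → ℝ) → ℝ) (x : Fin n → ℝ) : ℝ≥0∞ :=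
  maximalE (fun y => (‖f y‖₊ : ℝ≥0∞)) x

/-- The iterated maximal operator `M² = M ∘ M`. -/
def maximal2 (f : (Fin n → ℝ) → ℝ) : (Fin n → ℝ) → ℝ≥0∞ :=
  maximalE (maximal f)

/-- `M_r w = (M(w^r))^{1/r}`. -/
def maximalR (r : ℝ) (w : (Fin n → ℝ) → ℝ) (x : Fin n → ℝ) : ℝ≥0∞ :=
  (maximal (fun y => w y ^ r) x) ^ (1 / r)

/-- `M_ε f = (M(|f|^ε))^{1/ε}`. -/
def maximalPow (e : ℝ) (f : (Fin n → ℝ) → ℝ) (x : Fin n → ℝ) : ℝ≥0∞ :=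
  (maximal (fun y => |f y| ^ e) x) ^ (1 / e)

/-- The Fefferman–Stein sharp maximal operator. -/
def sharpMaximal (f : (Fin n → ℝ) → ℝ) (x : Fin n → ℝ) : ℝ≥0∞ :=
  ⨆ (Q : Cube n) (_ : x ∈ Q.set),
    (volume Q.set)⁻¹ * ∫⁻ y in Q.set, ‖f y - ⨍ z in Q.set, f z‖₊

/-- `M^#_δ f = (M^#(|f|^δ))^{1/δ}`. -/
def sharpMaximalPow (d : ℝ) (f : (Fin n → ℝ) → ℝ) (x : Fin n → ℝ) : ℝ≥0∞ :=
  (sharpMaximal (fun y => |f y| ^ d) x) ^ (1 / d)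

/-- Weighted `L^p` (quasi-)norm with `ℝ≥0∞`-valued integrand and weight. -/
def wnormG (g : (Fin n → ℝ) → ℝ≥0∞) (p : ℝ) (W : (Fin n → ℝ) → ℝ≥0∞) : ℝ≥0∞ :=
  (∫⁻ x, g x ^ p * W x) ^ (1 / p)

/-- Weighted `L^p` norm of a real function against an `ℝ≥0∞`-valued weight. -/
def wnormE (f : (Fin n → ℝ) → ℝ) (p : ℝ) (W : (Fin n → ℝ) → ℝ≥0∞) : ℝ≥0∞ :=
  wnormG (fun x => (‖f x‖₊ : ℝ≥0∞)) p W

/-- Weighted `L^p` norm `‖f‖_{L^p(w)}`. -/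
def wnorm (f : (Fin n → ℝ) → ℝ) (p : ℝ) (w : (Fin n → ℝ) → ℝ) : ℝ≥0∞ :=
  wnormE f p (fun x => ENNReal.ofReal (w x))

/-- The BMO seminorm. -/
def bmoNorm (b : (Fin n → ℝ) → ℝ) : ℝ≥0∞ :=
  ⨆ Q : Cube n, (volume Q.set)⁻¹ * ∫⁻ y in Q.set, ‖b y - ⨍ z in Q.set, b z‖₊

/-- `b ∈ BMO`. -/
def IsBMO (b : (Fin n → ℝ) → ℝ) : Prop :=
  LocallyIntegrable b volume ∧ bmoNorm b ≠ ⊤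

/-- A weight: a nonnegative locally integrable (measurable) function. -/
def IsWeight (w : (Fin n → ℝ) → ℝ) : Prop :=
  Measurable w ∧ (∀ x, 0 ≤ w x) ∧ LocallyIntegrable w volume

/-- The `A₁` constant: the least `c` with `Mw ≤ c·w` a.e. -/
def A1const (w : (Fin n → ℝ) → ℝ) : ℝ≥0∞ :=
  sInf {c : ℝ≥0∞ | ∀ᵐ x ∂(volume : Measure (Fin n → ℝ)),
    maximal w x ≤ c * ENNReal.ofReal (w x)}

/-- `w ∈ A₁`. -/
def IsA1 (w : (Fin n → ℝ) → ℝ) : Prop :=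
  IsWeight w ∧ A1const w ≠ ⊤

/-- The `A_q` constant for `1 < q < ∞`; note `1 - q' = -1/(q-1)`. -/
def ApConst (q : ℝ) (w : (Fin n → ℝ) → ℝ) : ℝ≥0∞ :=
  ⨆ Q : Cube n,
    ((volume Q.set)⁻¹ * ∫⁻ y in Q.set, ENNReal.ofReal (w y)) *
      ((volume Q.set)⁻¹ * ∫⁻ y in Q.set, ENNReal.ofReal (w y) ^ (-(q - 1)⁻¹)) ^ (q - 1)

/-- The `A_q` constant for `1 ≤ q < ∞`. -/
def AqConst (q : ℝ) (w : (Fin n → ℝ) → ℝ) : ℝ≥0∞ :=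
  if q = 1 then A1const w else ApConst q w

/-- `w ∈ A_q`, `1 ≤ q < ∞`. -/
def IsAq (q : ℝ) (w : (Fin n → ℝ) → ℝ) : Prop :=
  IsWeight w ∧ AqConst q w ≠ ⊤

/-- `w ∈ A_∞ = ⋃_{q ≥ 1} A_q`. -/
def IsAinfty (w : (Fin n → ℝ) → ℝ) : Prop :=
  ∃ q : ℝ, 1 ≤ q ∧ IsAq q w

/-- A Calderón–Zygmund operator on `ℝⁿ`. -/
structure CZO (n : ℕ) where
  T : ((Fin n → ℝ) → ℝ) → ((Fin n → ℝ) → ℝ)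
  map_add : ∀ f g, T (f + g) = T f + T g
  map_smul : ∀ (c : ℝ) (f), T (c • f) = c • T f
  bddL2 : ∃ A : ℝ≥0∞, A ≠ ⊤ ∧ ∀ f, eLpNorm (T f) 2 volume ≤ A * eLpNorm f 2 volume
  K : (Fin n → ℝ) → (Fin n → ℝ) → ℝ
  C : ℝ
  C_pos : 0 < C
  eps : ℝ
  eps_pos : 0 < eps
  size : ∀ x y, x ≠ y → |K x y| ≤ C / ‖x - y‖ ^ n
  smooth : ∀ x y z, x ≠ y → 2 * ‖x - z‖ < ‖x - y‖ →
    |K x y - K z y| + |K y x - K y z| ≤ C * ‖x - z‖ ^ eps / ‖x - y‖ ^ ((n : ℝ) + eps)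
  repr : ∀ f : (Fin n → ℝ) → ℝ, ContDiff ℝ (⊤ : ℕ∞) f → HasCompactSupport f →
    ∀ x ∉ tsupport f, T f x = ∫ y, K x y * f y

/-- The commutator `[b,T]f = b·Tf − T(bf)`. -/
def commutatorCZ (b : (Fin n → ℝ) → ℝ) (T : CZO n) (f : (Fin n → ℝ) → ℝ) :
    (Fin n → ℝ) → ℝ :=
  fun x => b x * T.T f x - T.T (fun y => b y * f y) x

/-- Bounded measurable compactly supported function. -/
def BddCompactSupp (f : (Fin n → ℝ) → ℝ) : Prop :=
  Measurable f ∧ HasCompactSupport f ∧ ∃ M : ℝ, ∀ x, |f x| ≤ M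

/-- The weighted measure `w(E) = ∫_E w dx`. -/
def wMeasure (w : (Fin n → ℝ) → ℝ) (E : Set (Fin n → ℝ)) : ℝ≥0∞ :=
  ∫⁻ x in E, ENNReal.ofReal (w x)

/-- `Φ(t) = t(1 + log⁺ t)`. -/
def Phi (t : ℝ) : ℝ := t * (1 + max (Real.log t) 0)


/-- The dyadic cube `∏_i [m_i 2^k, (m_i+1) 2^k)`. -/
def dyadicCube (n : ℕ) (k : ℤ) (m : Fin n → ℤ) : Set (Fin n → ℝ) :=
  {y | ∀ i, (m i : ℝ) * (2 : ℝ) ^ k ≤ y i ∧ y i < ((m i : ℝ) + 1) * (2 : ℝ) ^ k}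

/-- Dyadic maximal operator on `ℝ≥0∞`-valued functions. -/
def dyadicMaximalE (g : (Fin n → ℝ) → ℝ≥0∞) (x : Fin n → ℝ) : ℝ≥0∞ :=
  ⨆ (k : ℤ) (m : Fin n → ℤ) (_ : x ∈ dyadicCube n k m),
    (volume (dyadicCube n k m))⁻¹ * ∫⁻ y in dyadicCube n k m, g y

/-- The dyadic Hardy–Littlewood maximal operator `M^d`. -/
def dyadicMaximal (f : (Fin n → ℝ) → ℝ) (x : Fin n → ℝ) : ℝ≥0∞ :=
  dyadicMaximalE (fun y => (‖f y‖₊ : ℝ≥0∞)) x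

/-- `M^d_ε f = (M^d(|f|^ε))^{1/ε}`. -/
def dyadicMaximalPow (e : ℝ) (f : (Fin n → ℝ) → ℝ) (x : Fin n → ℝ) : ℝ≥0∞ :=
  (dyadicMaximal (fun y => |f y| ^ e) x) ^ (1 / e)

/-- The dyadic sharp maximal operator `M^{#,d}`. -/
def dyadicSharpMaximal (f : (Fin n → ℝ) → ℝ) (x : Fin n → ℝ) : ℝ≥0∞ :=
  ⨆ (k : ℤ) (m : Fin n → ℤ) (_ : x ∈ dyadicCube n k m),
    (volume (dyadicCube n k m))⁻¹ *
      ∫⁻ y in dyadicCube n k m, ‖f y - ⨍ z in dyadicCube n k m, f z‖₊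

/-- `M^{#,d}_δ f = (M^{#,d}(|f|^δ))^{1/δ}`. -/
def dyadicSharpMaximalPow (d : ℝ) (f : (Fin n → ℝ) → ℝ) (x : Fin n → ℝ) : ℝ≥0∞ :=
  (dyadicSharpMaximal (fun y => |f y| ^ d) x) ^ (1 / d)

/-- The Luxemburg `L log L` average norm `‖f‖_{L log L, s}`. -/
def luxLlogL (f : (Fin n → ℝ) → ℝ) (s : Set (Fin n → ℝ)) : ℝ≥0∞ :=
  sInf {lam : ℝ≥0∞ | lam ≠ 0 ∧
    (volume s)⁻¹ * ∫⁻ y in s, ENNReal.ofReal (Phi (|f y| / lam.toReal)) ≤ 1}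

section AuxJN
open Metric

lemma floor_half_floor (r : ℝ) : ⌊r/2⌋ = ⌊((⌊r⌋:ℝ))/2⌋ := by
  have h1 : (⌊r⌋ : ℝ) ≤ r := Int.floor_le r
  have h2 : r < ⌊r⌋ + 1 := Int.lt_floor_add_one r
  rcases Int.even_or_odd ⌊r⌋ with ⟨q, hq⟩ | ⟨q, hq⟩
  · have hq' : (⌊r⌋ : ℝ) = 2*q := by rw [hq]; push_cast; ring
    rw [hq', show ((2:ℝ)*q)/2 = (q:ℝ) by ring, Int.floor_intCast]
    refine Int.floor_eq_iff.mpr ⟨by linarith, by push_cast; linarith⟩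
  · have hq' : (⌊r⌋ : ℝ) = 2*q+1 := by rw [hq]; push_cast; ring
    rw [hq']
    have : ⌊((2:ℝ)*q+1)/2⌋ = q := by
      refine Int.floor_eq_iff.mpr ⟨by push_cast; linarith, by push_cast; linarith⟩
    rw [this]
    refine Int.floor_eq_iff.mpr ⟨by push_cast; linarith, by push_cast; linarith⟩

lemma Cube.set_eq_closedBall (Q : Cube n) : Q.set = closedBall Q.center Q.half := by
  ext y
  simp [Cube.set, mem_closedBall, dist_pi_le_iff Q.half_pos.le, Real.dist_eq]

lemma Cube.set_eq_pi (Q : Cube n) :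
    Q.set = Set.pi univ (fun i => Icc (Q.center i - Q.half) (Q.center i + Q.half)) := by
  ext y
  simp only [Cube.set, mem_setOf_eq, mem_univ_pi, mem_Icc, abs_le]
  refine forall_congr' fun i => ⟨fun h => ⟨by linarith [h.1, h.2], by linarith [h.1, h.2]⟩,
    fun h => ⟨by linarith [h.1, h.2], by linarith [h.1, h.2]⟩⟩

lemma Cube.measurableSet (Q : Cube n) : MeasurableSet Q.set := by
  rw [Q.set_eq_closedBall]; exact measurableSet_closedBall

lemma Cube.volume_set (Q : Cube n) :
    volume Q.set = ENNReal.ofReal (2 * Q.half) ^ n := by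
  rw [Q.set_eq_pi, volume_pi_pi]
  simp [Real.volume_Icc]
  congr 1; rw [← two_mul, ENNReal.ofReal_mul (by norm_num), ENNReal.ofReal_ofNat]

lemma Cube.volume_pos (Q : Cube n) : 0 < volume Q.set := by
  rw [Q.set_eq_closedBall]
  exact measure_closedBall_pos _ _ Q.half_pos

lemma Cube.volume_lt_top (Q : Cube n) : volume Q.set < ⊤ := by
  rw [Q.set_eq_closedBall]; exact measure_closedBall_lt_top

/-! Dyadic machinery relative to a cube Q. -/

def lo (Q : Cube n) (i : Fin n) : ℝ := Q.center i - Q.half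

/-- side length of generation-g dyadic subcubes -/
def sc (Q : Cube n) (g : ℕ) : ℝ := 2 * Q.half / 2 ^ g

lemma sc_pos (Q : Cube n) (g : ℕ) : 0 < sc Q g := by
  have := Q.half_pos; unfold sc; positivity

lemma sc_succ (Q : Cube n) (g : ℕ) : sc Q g = 2 * sc Q (g+1) := by
  unfold sc; rw [pow_succ]; field_simp

/-- dyadic index of a point at generation g -/
def idx (Q : Cube n) (g : ℕ) (y : Fin n → ℝ) (i : Fin n) : ℤ :=
  ⌊(y i - lo Q i) / sc Q g⌋

/-- the half-open dyadic cube of generation g containing y -/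
def Dc (Q : Cube n) (g : ℕ) (y : Fin n → ℝ) : Set (Fin n → ℝ) :=
  {z | ∀ i, idx Q g z i = idx Q g y i}

/-- the half-open version of Q itself -/
def Qh (Q : Cube n) : Set (Fin n → ℝ) :=
  Set.pi univ (fun i => Ico (lo Q i) (lo Q i + 2 * Q.half))

lemma idx_eq_iff (Q : Cube n) (g : ℕ) (z : Fin n → ℝ) (i : Fin n) (m : ℤ) :
    idx Q g z i = m ↔ z i ∈ Ico (lo Q i + m * sc Q g) (lo Q i + (m + 1) * sc Q g) := by
  have hs := sc_pos Q g
  rw [idx, Int.floor_eq_iff, mem_Ico, le_div_iff₀ hs, div_lt_iff₀ hs]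
  push_cast
  constructor
  · rintro ⟨h1, h2⟩; exact ⟨by linarith, by linarith⟩
  · rintro ⟨h1, h2⟩; exact ⟨by linarith, by linarith⟩

lemma Dc_eq_pi (Q : Cube n) (g : ℕ) (y : Fin n → ℝ) :
    Dc Q g y = Set.pi univ (fun i =>
      Ico (lo Q i + idx Q g y i * sc Q g) (lo Q i + (idx Q g y i + 1) * sc Q g)) := by
  ext z; simp only [Dc, mem_setOf_eq, mem_pi, mem_univ, forall_true_left]
  exact forall_congr' fun i => idx_eq_iff Q g z i _

lemma Dc_measurableSet (Q : Cube n) (g : ℕ) (y : Fin n → ℝ) : MeasurableSet (Dc Q g y) := by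
  rw [Dc_eq_pi]; exact MeasurableSet.univ_pi fun i => measurableSet_Ico

lemma volume_Dc (Q : Cube n) (g : ℕ) (y : Fin n → ℝ) :
    volume (Dc Q g y) = ENNReal.ofReal (sc Q g) ^ n := by
  rw [Dc_eq_pi, volume_pi_pi]
  have : ∀ i : Fin n, volume (Ico (lo Q i + idx Q g y i * sc Q g)
      (lo Q i + (idx Q g y i + 1) * sc Q g)) = ENNReal.ofReal (sc Q g) := by
    intro i; rw [Real.volume_Ico]; congr 1; ring
  simp [this]

lemma mem_Dc_self (Q : Cube n) (g : ℕ) (y : Fin n → ℝ) : y ∈ Dc Q g y := fun _ => rfl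

lemma Dc_eq_of_mem {Q : Cube n} {g : ℕ} {y z : Fin n → ℝ} (h : z ∈ Dc Q g y) :
    Dc Q g z = Dc Q g y := by
  ext w; constructor <;> intro hw i
  · rw [hw i, h i]
  · rw [hw i, ← h i]

lemma idx_succ (Q : Cube n) (g : ℕ) (y : Fin n → ℝ) (i : Fin n) :
    idx Q g y i = ⌊((idx Q (g+1) y i : ℝ))/2⌋ := by
  rw [idx, idx, ← floor_half_floor]
  congr 1
  rw [sc_succ, div_div, mul_comm]

lemma Dc_succ_subset (Q : Cube n) (g : ℕ) (y : Fin n → ℝ) :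
    Dc Q (g+1) y ⊆ Dc Q g y := by
  intro z hz i
  rw [idx_succ Q g z i, idx_succ Q g y i, hz i]

lemma Dc_mono (Q : Cube n) {g g' : ℕ} (h : g ≤ g') (y : Fin n → ℝ) :
    Dc Q g' y ⊆ Dc Q g y := by
  obtain ⟨d, rfl⟩ := Nat.exists_eq_add_of_le h
  induction d with
  | zero => simp
  | succ d ih => exact (Dc_succ_subset Q (g+d) y).trans (ih (Nat.le_add_right g d))

lemma sc_zero (Q : Cube n) : sc Q 0 = 2 * Q.half := by simp [sc]

lemma mem_Qh_iff (Q : Cube n) (y : Fin n → ℝ) : y ∈ Qh Q ↔ ∀ i, idx Q 0 y i = 0 := by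
  simp only [Qh, mem_univ_pi]
  refine forall_congr' fun i => ?_
  rw [idx_eq_iff, sc_zero]
  norm_num

lemma Dc_zero (Q : Cube n) {y : Fin n → ℝ} (hy : y ∈ Qh Q) : Dc Q 0 y = Qh Q := by
  ext z
  rw [mem_Qh_iff] at hy ⊢
  constructor
  · intro hz i; rw [← hy i]; exact hz i
  · intro hz i; rw [hz i, hy i]

lemma Qh_subset (Q : Cube n) : Qh Q ⊆ Q.set := by
  rw [Cube.set_eq_pi]
  refine Set.pi_mono fun i _ => ?_
  refine (Ico_subset_Icc_self).trans ?_
  apply Icc_subset_Icc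
  · simp [lo]
  · simp only [lo]; linarith [Q.half_pos]

lemma Qh_measurableSet (Q : Cube n) : MeasurableSet (Qh Q) :=
  MeasurableSet.univ_pi fun _ => measurableSet_Ico

lemma volume_Qh (Q : Cube n) : volume (Qh Q) = volume Q.set := by
  rw [Qh, volume_pi_pi, Cube.volume_set]
  simp [Real.volume_Ico]

lemma Qh_ae_eq (Q : Cube n) : Qh Q =ᵐ[volume] Q.set :=
  ae_eq_of_subset_of_measure_ge (Qh_subset Q) (volume_Qh Q).ge
    (Qh_measurableSet Q).nullMeasurableSet Q.volume_lt_top.ne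

lemma restrict_Qh (Q : Cube n) : volume.restrict (Qh Q) = volume.restrict Q.set :=
  Measure.restrict_congr_set (Qh_ae_eq Q)

def Ccube (Q : Cube n) (g : ℕ) (y : Fin n → ℝ) : Cube n :=
  ⟨fun i => lo Q i + idx Q g y i * sc Q g + sc Q g / 2, sc Q g / 2, by
    have := sc_pos Q g; linarith⟩

lemma Ccube_set (Q : Cube n) (g : ℕ) (y : Fin n → ℝ) :
    (Ccube Q g y).set = Set.pi univ (fun i =>
      Icc (lo Q i + idx Q g y i * sc Q g) (lo Q i + (idx Q g y i + 1) * sc Q g)) := by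
  rw [Cube.set_eq_pi]
  refine Set.pi_congr rfl fun i _ => ?_
  congr 1 <;> simp only [Ccube] <;> ring

lemma Dc_subset_Ccube (Q : Cube n) (g : ℕ) (y : Fin n → ℝ) :
    Dc Q g y ⊆ (Ccube Q g y).set := by
  rw [Dc_eq_pi, Ccube_set]
  exact Set.pi_mono fun i _ => Ico_subset_Icc_self

lemma volume_Ccube (Q : Cube n) (g : ℕ) (y : Fin n → ℝ) :
    volume (Ccube Q g y).set = volume (Dc Q g y) := by
  rw [Cube.volume_set, volume_Dc]
  congr 2
  simp only [Ccube]; ring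

lemma Dc_ae_eq_Ccube (Q : Cube n) (g : ℕ) (y : Fin n → ℝ) :
    Dc Q g y =ᵐ[volume] (Ccube Q g y).set :=
  ae_eq_of_subset_of_measure_ge (Dc_subset_Ccube Q g y) (volume_Ccube Q g y).le
    (Dc_measurableSet Q g y).nullMeasurableSet ((volume_Ccube Q g y).trans_lt
      (by rw [← volume_Ccube]; exact (Ccube Q g y).volume_lt_top)).ne

lemma restrict_Dc (Q : Cube n) (g : ℕ) (y : Fin n → ℝ) :
    volume.restrict (Dc Q g y) = volume.restrict (Ccube Q g y).set :=
  Measure.restrict_congr_set (Dc_ae_eq_Ccube Q g y)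

lemma volume_Dc_succ (Q : Cube n) (g : ℕ) (y : Fin n → ℝ) :
    volume (Dc Q g y) = 2 ^ n * volume (Dc Q (g+1) y) := by
  rw [volume_Dc, volume_Dc, sc_succ Q g, ← mul_pow]
  congr 1
  rw [ENNReal.ofReal_mul (by norm_num)]
  norm_num


section Avg
variable {b : (Fin n → ℝ) → ℝ} (hb : LocallyIntegrable b volume)

include hb in
lemma integrableOn_cube (R : Cube n) : IntegrableOn b R.set volume := by
  refine hb.integrableOn_isCompact ?_
  rw [R.set_eq_closedBall]; exact isCompact_closedBall _ _

include hb in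
lemma integrableOn_cube_sub (R : Cube n) (c₀ : ℝ) :
    IntegrableOn (fun z => b z - c₀) R.set volume :=
  (integrableOn_cube hb R).sub (integrableOn_const R.volume_lt_top.ne)

include hb in
lemma ofReal_avg (R : Cube n) (c₀ : ℝ) :
    ENNReal.ofReal (⨍ z in R.set, ‖b z - c₀‖) =
      (volume R.set)⁻¹ * ∫⁻ z in R.set, ‖b z - c₀‖₊ := by
  rw [setAverage_eq, smul_eq_mul, measureReal_def,
    ENNReal.ofReal_mul (by positivity),
    ofReal_integral_norm_eq_lintegral_enorm (integrableOn_cube_sub hb R c₀),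
    ENNReal.ofReal_inv_of_pos (ENNReal.toReal_pos R.volume_pos.ne' R.volume_lt_top.ne),
    ENNReal.ofReal_toReal R.volume_lt_top.ne]
  rfl

include hb in
lemma avg_sub_le (R : Cube n) (c₀ : ℝ) :
    ENNReal.ofReal ‖(⨍ z in R.set, b z) - c₀‖ ≤
      (volume R.set)⁻¹ * ∫⁻ z in R.set, ‖b z - c₀‖₊ := by
  rw [← ofReal_avg hb R c₀]
  refine ENNReal.ofReal_le_ofReal ?_
  have h1 : (⨍ z in R.set, b z) - c₀ = ⨍ z in R.set, (b z - c₀) := by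
    rw [setAverage_eq, setAverage_eq, smul_eq_mul, smul_eq_mul,
      integral_sub (integrableOn_cube hb R) (integrableOn_const R.volume_lt_top.ne),
      setIntegral_const, smul_eq_mul, mul_sub]
    congr 1
    rw [← mul_assoc, measureReal_def, inv_mul_cancel₀ (ENNReal.toReal_pos R.volume_pos.ne'
      R.volume_lt_top.ne).ne', one_mul]
  rw [h1, setAverage_eq, smul_eq_mul]
  rw [Real.norm_eq_abs]
  calc |(volume R.set).toReal⁻¹ * ∫ z in R.set, (b z - c₀)|
      = (volume R.set).toReal⁻¹ * |∫ z in R.set, (b z - c₀)| := by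
        rw [abs_mul, abs_of_nonneg (by positivity)]
    _ ≤ (volume R.set).toReal⁻¹ * ∫ z in R.set, ‖b z - c₀‖ := by
        gcongr
        simpa using norm_integral_le_integral_norm (μ := volume.restrict R.set)
          (fun z => b z - c₀)
    _ = ⨍ z in R.set, ‖b z - c₀‖ := by rw [setAverage_eq, smul_eq_mul, measureReal_def]

lemma lintegral_cube_le_bmo (R : Cube n) :
    (∫⁻ y in R.set, ‖b y - ⨍ z in R.set, b z‖₊) ≤ bmoNorm b * volume R.set := by
  have h : (volume R.set)⁻¹ * ∫⁻ y in R.set, ‖b y - ⨍ z in R.set, b z‖₊ ≤ bmoNorm b :=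
    le_iSup (fun R : Cube n => (volume R.set)⁻¹ * ∫⁻ y in R.set, ‖b y - ⨍ z in R.set, b z‖₊) R
  calc (∫⁻ y in R.set, ‖b y - ⨍ z in R.set, b z‖₊)
      = (volume R.set * (volume R.set)⁻¹) * ∫⁻ y in R.set, ‖b y - ⨍ z in R.set, b z‖₊ := by
        rw [ENNReal.mul_inv_cancel R.volume_pos.ne' R.volume_lt_top.ne, one_mul]
    _ = volume R.set * ((volume R.set)⁻¹ * ∫⁻ y in R.set, ‖b y - ⨍ z in R.set, b z‖₊) := by
        rw [mul_assoc]
    _ ≤ volume R.set * bmoNorm b := by gcongr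
    _ = bmoNorm b * volume R.set := mul_comm _ _

end Avg

section Stopping
variable (b : (Fin n → ℝ) → ℝ) (Q : Cube n)

/-- the average of b over Q -/
def cAvg : ℝ := ⨍ z in Q.set, b z

/-- dyadic average of ‖b - b_Q‖ at generation g around y -/
def Av (g : ℕ) (y : Fin n → ℝ) : ℝ≥0∞ :=
  (volume (Dc Q g y))⁻¹ * ∫⁻ z in Dc Q g y, ‖b z - cAvg b Q‖₊

def lam : ℝ≥0∞ := 2 * bmoNorm b

def Bad : Set (Fin n → ℝ) := {y | y ∈ Qh Q ∧ ∃ g, lam b < Av b Q g y}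

def tau (y : Fin n → ℝ) : ℕ := sInf {g | lam b < Av b Q g y}

variable {b Q}
variable (hb : LocallyIntegrable b volume) (hB0 : bmoNorm b ≠ 0) (hBtop : bmoNorm b ≠ ⊤)

lemma lam_lt_top (hBtop : bmoNorm b ≠ ⊤) : lam b < ⊤ := by
  rw [lam]; exact ENNReal.mul_lt_top (by norm_num) hBtop.lt_top

lemma lam_pos (hB0 : bmoNorm b ≠ 0) : 0 < lam b := by
  rw [lam]; exact ENNReal.mul_pos (by norm_num) hB0

lemma bmo_lt_lam (hB0 : bmoNorm b ≠ 0) (hBtop : bmoNorm b ≠ ⊤) : bmoNorm b < lam b := by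
  rw [lam, two_mul]
  exact ENNReal.lt_add_right hBtop hB0

lemma Av_congr {g : ℕ} {y z : Fin n → ℝ} (h : z ∈ Dc Q g y) : Av b Q g z = Av b Q g y := by
  rw [Av, Av, Dc_eq_of_mem h]

lemma Av_zero_le {y : Fin n → ℝ} (hy : y ∈ Qh Q) : Av b Q 0 y ≤ bmoNorm b := by
  rw [Av, Dc_zero Q hy, volume_Qh, restrict_Qh]
  exact le_iSup (fun R : Cube n =>
    (volume R.set)⁻¹ * ∫⁻ y in R.set, ‖b y - ⨍ z in R.set, b z‖₊) Q

lemma tau_spec {y : Fin n → ℝ} (hy : y ∈ Bad b Q) : lam b < Av b Q (tau b Q y) y :=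
  Nat.sInf_mem hy.2

lemma tau_min {y : Fin n → ℝ} {g : ℕ} (hg : g < tau b Q y) : Av b Q g y ≤ lam b :=
  not_lt.mp (Nat.notMem_of_lt_sInf hg)

lemma tau_pos (hB0 : bmoNorm b ≠ 0) (hBtop : bmoNorm b ≠ ⊤) {y : Fin n → ℝ}
    (hy : y ∈ Bad b Q) : 0 < tau b Q y := by
  rcases Nat.eq_zero_or_pos (tau b Q y) with h | h
  · exfalso
    have h1 := tau_spec hy
    rw [h] at h1
    exact absurd ((Av_zero_le hy.1).trans (bmo_lt_lam hB0 hBtop).le) (not_le.mpr h1)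
  · exact h

lemma Av_tau_le (hB0 : bmoNorm b ≠ 0) (hBtop : bmoNorm b ≠ ⊤) {y : Fin n → ℝ}
    (hy : y ∈ Bad b Q) : Av b Q (tau b Q y) y ≤ 2 ^ n * lam b := by
  set g := tau b Q y with hg
  obtain ⟨g', hg'⟩ : ∃ g', g = g' + 1 := ⟨g - 1, (Nat.succ_pred_eq_of_pos (tau_pos hB0 hBtop hy)).symm⟩
  have hsub : Dc Q g y ⊆ Dc Q g' y := hg' ▸ Dc_succ_subset Q g' y
  have hvol : volume (Dc Q g' y) = 2 ^ n * volume (Dc Q g y) := hg' ▸ volume_Dc_succ Q g' y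
  have hAv' : Av b Q g' y ≤ lam b := tau_min (by omega)
  have hpos : volume (Dc Q g y) ≠ 0 := by
    rw [volume_Dc]
    exact pow_ne_zero n (ENNReal.ofReal_pos.mpr (sc_pos Q g)).ne'
  have htop : volume (Dc Q g' y) ≠ ⊤ := by
    rw [volume_Dc]
    exact (pow_ne_top ENNReal.ofReal_ne_top)
  have hint : (∫⁻ z in Dc Q g' y, ‖b z - cAvg b Q‖₊) ≤ lam b * volume (Dc Q g' y) := by
    have hpos' : volume (Dc Q g' y) ≠ 0 := by
      rw [volume_Dc]; exact pow_ne_zero n (ENNReal.ofReal_pos.mpr (sc_pos Q g')).ne'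
    calc (∫⁻ z in Dc Q g' y, ‖b z - cAvg b Q‖₊)
        = volume (Dc Q g' y) * Av b Q g' y := by
          rw [Av, ← mul_assoc, ENNReal.mul_inv_cancel hpos' htop, one_mul]
      _ ≤ volume (Dc Q g' y) * lam b := by gcongr
      _ = lam b * volume (Dc Q g' y) := mul_comm _ _
  calc Av b Q g y ≤ (volume (Dc Q g y))⁻¹ * ∫⁻ z in Dc Q g' y, ‖b z - cAvg b Q‖₊ := by
        rw [Av]; gcongr
    _ ≤ (volume (Dc Q g y))⁻¹ * (lam b * (2 ^ n * volume (Dc Q g y))) := by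
        rw [← hvol]; gcongr
    _ = 2 ^ n * lam b * ((volume (Dc Q g y))⁻¹ * volume (Dc Q g y)) := by ring
    _ = 2 ^ n * lam b := by
        rw [ENNReal.inv_mul_cancel hpos (by rw [volume_Dc]; exact pow_ne_top ENNReal.ofReal_ne_top),
          mul_one]

lemma sel_eq_aux {y z w : Fin n → ℝ} (hy : y ∈ Bad b Q) (hz : z ∈ Bad b Q)
    (hle : tau b Q y ≤ tau b Q z)
    (hw : w ∈ Dc Q (tau b Q y) y ∩ Dc Q (tau b Q z) z) :
    tau b Q y = tau b Q z ∧ Dc Q (tau b Q y) y = Dc Q (tau b Q z) z := by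
  have hw1 : w ∈ Dc Q (tau b Q y) z := Dc_mono Q hle z hw.2
  have he : Dc Q (tau b Q y) z = Dc Q (tau b Q y) y := by
    rw [← Dc_eq_of_mem hw1, Dc_eq_of_mem hw.1]
  have hyz : y ∈ Dc Q (tau b Q y) z := he ▸ mem_Dc_self Q _ y
  have hAv : Av b Q (tau b Q y) z = Av b Q (tau b Q y) y := by rw [Av, Av, he]
  have : lam b < Av b Q (tau b Q y) z := hAv ▸ tau_spec hy
  have hle2 : tau b Q z ≤ tau b Q y := Nat.sInf_le this
  have heq : tau b Q y = tau b Q z := le_antisymm hle hle2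
  exact ⟨heq, by rw [← heq, he]⟩

lemma sel_eq {y z w : Fin n → ℝ} (hy : y ∈ Bad b Q) (hz : z ∈ Bad b Q)
    (hw : w ∈ Dc Q (tau b Q y) y ∩ Dc Q (tau b Q z) z) :
    tau b Q y = tau b Q z ∧ Dc Q (tau b Q y) y = Dc Q (tau b Q z) z := by
  rcases le_total (tau b Q y) (tau b Q z) with h | h
  · exact sel_eq_aux hy hz h hw
  · obtain ⟨h1, h2⟩ := sel_eq_aux hz hy h ⟨hw.2, hw.1⟩
    exact ⟨h1.symm, h2.symm⟩

end Stopping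

section Good
variable {b : (Fin n → ℝ) → ℝ} {Q : Cube n}

lemma ae_good (hb : LocallyIntegrable b volume) :
    ∀ᵐ y ∂(volume : Measure (Fin n → ℝ)),
      (∀ g, Av b Q g y ≤ lam b) → (‖b y - cAvg b Q‖₊ : ℝ≥0∞) ≤ lam b := by
  have hb' : LocallyIntegrable (b - fun _ => cAvg b Q) volume :=
    hb.sub (locallyIntegrable_const _)
  have hloc : LocallyIntegrable (fun z => ‖b z - cAvg b Q‖) volume := by
    rw [locallyIntegrable_iff] at hb' ⊢
    exact fun K hK => (hb' K hK).norm
  filter_upwards [IsUnifLocDoublingMeasure.ae_tendsto_average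
    (μ := (volume : Measure (Fin n → ℝ))) hloc 1] with y hy hAv
  have hδ : Filter.Tendsto (fun g : ℕ => sc Q g / 2) Filter.atTop (nhdsWithin 0 (Set.Ioi 0)) := by
    apply tendsto_nhdsWithin_of_tendsto_nhds_of_eventually_within
    · have h2 : Filter.Tendsto (fun g : ℕ => Q.half * (1/2 : ℝ)^g) Filter.atTop (nhds 0) := by
        simpa using (tendsto_pow_atTop_nhds_zero_of_lt_one (by norm_num : (0:ℝ) ≤ 1/2)
          (by norm_num : (1/2 : ℝ) < 1)).const_mul Q.half
      convert h2 using 2 with g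
      rw [sc, one_div]
      ring_nf
      norm_num
    · exact Filter.Eventually.of_forall fun g => by
        have := sc_pos Q g; exact mem_Ioi.mpr (by linarith)
  have hmem : ∀ᶠ g : ℕ in Filter.atTop,
      y ∈ closedBall ((Ccube Q g y).center) (1 * (sc Q g / 2)) := by
    refine Filter.Eventually.of_forall fun g => ?_
    have h1 : y ∈ (Ccube Q g y).set := Dc_subset_Ccube Q g y (mem_Dc_self Q g y)
    rw [Cube.set_eq_closedBall] at h1
    simpa [Ccube] using h1
  have htend := hy (fun g => (Ccube Q g y).center) (fun g => sc Q g / 2) hδ hmem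
  have heq : ∀ g : ℕ, ENNReal.ofReal (⨍ z in closedBall ((Ccube Q g y).center) (sc Q g / 2),
      ‖b z - cAvg b Q‖) = Av b Q g y := by
    intro g
    have hcb : closedBall ((Ccube Q g y).center) (sc Q g / 2) = (Ccube Q g y).set := by
      rw [Cube.set_eq_closedBall]; rfl
    rw [hcb, ofReal_avg hb (Ccube Q g y) (cAvg b Q), Av, volume_Ccube, restrict_Dc]
  have hlim := (ENNReal.continuous_ofReal.continuousAt).tendsto.comp htend
  rw [← enorm_eq_nnnorm, ← ofReal_norm]
  exact le_of_tendsto' hlim fun g => by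
    rw [Function.comp_apply, heq g]; exact hAv g

end Good

section Sel
variable (b : (Fin n → ℝ) → ℝ) (Q : Cube n)

def Ic (p : ℕ × (Fin n → ℤ)) : Set (Fin n → ℝ) := {z | ∀ i, idx Q p.1 z i = p.2 i}

def Sel : Set (ℕ × (Fin n → ℤ)) :=
  {p | ∃ y, y ∈ Bad b Q ∧ tau b Q y = p.1 ∧ ∀ i, idx Q p.1 y i = p.2 i}

variable {b Q}

lemma Ic_eq_Dc {p : ℕ × (Fin n → ℤ)} {y : Fin n → ℝ}
    (h1 : tau b Q y = p.1) (h2 : ∀ i, idx Q p.1 y i = p.2 i) :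
    Ic Q p = Dc Q (tau b Q y) y := by
  ext z
  rw [show Dc Q (tau b Q y) y = Dc Q p.1 y by rw [h1]]
  exact forall_congr' fun i => by rw [h2 i]

lemma Bad_subset_biUnion : Bad b Q ⊆ ⋃ p ∈ Sel b Q, Ic Q p := by
  intro y hy
  refine mem_biUnion (show (tau b Q y, idx Q (tau b Q y) y) ∈ Sel b Q from
    ⟨y, hy, rfl, fun i => rfl⟩) ?_
  exact fun i => rfl

lemma Sel_countable : (Sel b Q).Countable := Set.to_countable _

lemma Ic_measurable {p : ℕ × (Fin n → ℤ)} (hp : p ∈ Sel b Q) : MeasurableSet (Ic Q p) := by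
  obtain ⟨y, _, h1, h2⟩ := hp
  rw [Ic_eq_Dc h1 h2]
  exact Dc_measurableSet Q _ y

lemma Sel_pairwiseDisjoint : (Sel b Q).PairwiseDisjoint (Ic Q) := by
  intro p hp q hq hpq
  obtain ⟨y, hy, hy1, hy2⟩ := hp
  obtain ⟨z, hz, hz1, hz2⟩ := hq
  rw [Function.onFun, Ic_eq_Dc hy1 hy2, Ic_eq_Dc hz1 hz2]
  rw [Set.disjoint_left]
  intro w hw1 hw2
  obtain ⟨ht, hD⟩ := sel_eq hy hz ⟨hw1, hw2⟩
  apply hpq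
  have hp1 : p.1 = q.1 := by rw [← hy1, ← hz1, ht]
  have hp2 : p.2 = q.2 := by
    funext i
    have e1 : p.2 i = idx Q (tau b Q y) y i := by rw [← hy2 i, hy1]
    have e2 : q.2 i = idx Q (tau b Q z) z i := by rw [← hz2 i, hz1]
    rw [e1, e2, ← hw1 i, ← hw2 i, ht]
  exact Prod.ext hp1 hp2

lemma Ic_subset_Qh {p : ℕ × (Fin n → ℤ)} (hp : p ∈ Sel b Q) : Ic Q p ⊆ Qh Q := by
  obtain ⟨y, hy, h1, h2⟩ := hp
  rw [Ic_eq_Dc h1 h2, ← Dc_zero Q hy.1]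
  exact Dc_mono Q (Nat.zero_le _) y

lemma sel_sum (hB0 : bmoNorm b ≠ 0) (hBtop : bmoNorm b ≠ ⊤) :
    ∑' p : (Sel b Q), volume (Ic Q p) ≤ 2⁻¹ * volume Q.set := by
  set F : (Fin n → ℝ) → ℝ≥0∞ := fun z => (‖b z - cAvg b Q‖₊ : ℝ≥0∞) with hF
  have hlam0 : lam b ≠ 0 := (lam_pos hB0).ne'
  have hlamtop : lam b ≠ ⊤ := (lam_lt_top hBtop).ne
  have step1 : ∀ p : (Sel b Q), volume (Ic Q p) ≤ (lam b)⁻¹ * ∫⁻ z in Ic Q p, F z := by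
    rintro ⟨p, hp⟩
    obtain ⟨y, hy, h1, h2⟩ := hp
    rw [Ic_eq_Dc h1 h2]
    have hAv := tau_spec hy
    have hvol0 : volume (Dc Q (tau b Q y) y) ≠ 0 := by
      rw [volume_Dc]; exact pow_ne_zero n (ENNReal.ofReal_pos.mpr (sc_pos Q _)).ne'
    have hvoltop : volume (Dc Q (tau b Q y) y) ≠ ⊤ := by
      rw [volume_Dc]; exact pow_ne_top ENNReal.ofReal_ne_top
    have key : lam b * volume (Dc Q (tau b Q y) y) ≤ ∫⁻ z in Dc Q (tau b Q y) y, F z := by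
      calc lam b * volume (Dc Q (tau b Q y) y)
          ≤ Av b Q (tau b Q y) y * volume (Dc Q (tau b Q y) y) := mul_le_mul_left hAv.le _
        _ = (∫⁻ z in Dc Q (tau b Q y) y, F z) *
            ((volume (Dc Q (tau b Q y) y))⁻¹ * volume (Dc Q (tau b Q y) y)) := by
            rw [Av]; ring
        _ = ∫⁻ z in Dc Q (tau b Q y) y, F z := by
            rw [ENNReal.inv_mul_cancel hvol0 hvoltop, mul_one]
    calc volume (Dc Q (tau b Q y) y)
        = (lam b)⁻¹ * (lam b * volume (Dc Q (tau b Q y) y)) := by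
          rw [← mul_assoc, ENNReal.inv_mul_cancel hlam0 hlamtop, one_mul]
      _ ≤ (lam b)⁻¹ * ∫⁻ z in Dc Q (tau b Q y) y, F z := by gcongr
  calc ∑' p : (Sel b Q), volume (Ic Q p)
      ≤ ∑' p : (Sel b Q), (lam b)⁻¹ * ∫⁻ z in Ic Q (p : ℕ × (Fin n → ℤ)), F z :=
        Summable.tsum_le_tsum step1 ENNReal.summable ENNReal.summable
    _ = (lam b)⁻¹ * ∑' p : (Sel b Q), ∫⁻ z in Ic Q (p : ℕ × (Fin n → ℤ)), F z :=
        ENNReal.tsum_mul_left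
    _ ≤ (lam b)⁻¹ * (bmoNorm b * volume Q.set) := by
        gcongr
        have hμ' : ∀ p : (Sel b Q), (∫⁻ z in Ic Q (p : ℕ × (Fin n → ℤ)), F z) =
            volume.withDensity F (Ic Q p) := fun ⟨p, hp⟩ =>
          (withDensity_apply F (Ic_measurable hp)).symm
        calc (∑' p : (Sel b Q), ∫⁻ z in Ic Q (p : ℕ × (Fin n → ℤ)), F z)
            = ∑' p : (Sel b Q), volume.withDensity F (Ic Q p) := by
              exact tsum_congr hμ'
          _ = volume.withDensity F (⋃ p ∈ Sel b Q, Ic Q p) :=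
              (measure_biUnion Sel_countable Sel_pairwiseDisjoint
                (fun p hp => Ic_measurable hp)).symm
          _ ≤ volume.withDensity F (Qh Q) := by
              apply measure_mono
              exact iUnion₂_subset fun p hp => Ic_subset_Qh hp
          _ = ∫⁻ z in Qh Q, F z := withDensity_apply F (Qh_measurableSet Q)
          _ = ∫⁻ z in Q.set, F z := by rw [restrict_Qh]
          _ ≤ bmoNorm b * volume Q.set := lintegral_cube_le_bmo Q
    _ = ((lam b)⁻¹ * bmoNorm b) * volume Q.set := by rw [mul_assoc]
    _ = 2⁻¹ * volume Q.set := by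
        congr 1
        rw [lam, ENNReal.mul_inv (Or.inl (by norm_num)) (Or.inl (by norm_num)), mul_assoc,
          ENNReal.inv_mul_cancel hB0 hBtop, mul_one]

end Sel

section JN
variable {b : (Fin n → ℝ) → ℝ}

theorem jn_distribution (hb : LocallyIntegrable b volume) (hB0 : bmoNorm b ≠ 0)
    (hBtop : bmoNorm b ≠ ⊤) :
    ∀ (k : ℕ) (Q : Cube n),
      volume {y | y ∈ Q.set ∧
          (2 ^ n * lam b) * (k : ℝ≥0∞) < (‖b y - cAvg b Q‖₊ : ℝ≥0∞)} ≤
        2⁻¹ ^ k * volume Q.set := by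
  set a : ℝ≥0∞ := 2 ^ n * lam b with ha
  have hatop : a ≠ ⊤ :=
    ENNReal.mul_ne_top (pow_ne_top (by norm_num)) (lam_lt_top hBtop).ne
  have hlam_le_a : lam b ≤ a := by
    rw [ha]
    calc lam b = 1 * lam b := (one_mul _).symm
      _ ≤ 2 ^ n * lam b := by
          gcongr
          exact one_le_pow_of_one_le' (by norm_num : (1:ℝ≥0∞) ≤ 2) n
  intro k
  induction k with
  | zero => intro Q; simpa using measure_mono (fun y (hy : y ∈ _) => hy.1)
  | succ k ih =>
    intro Q
    set F : (Fin n → ℝ) → ℝ≥0∞ := fun z => (‖b z - cAvg b Q‖₊ : ℝ≥0∞) with hF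
    set S : Set (Fin n → ℝ) :=
      {y | y ∈ Q.set ∧ a * ((k+1 : ℕ) : ℝ≥0∞) < F y} with hS
    have hQnull : volume (Q.set \ Qh Q) = 0 := by
      rw [measure_diff (Qh_subset Q) (Qh_measurableSet Q).nullMeasurableSet
        (by rw [volume_Qh]; exact Q.volume_lt_top.ne), volume_Qh, tsub_self]
    set Ngood : Set (Fin n → ℝ) :=
      {y | (∀ g, Av b Q g y ≤ lam b) ∧ lam b < F y} with hNg
    have hGoodnull : volume Ngood = 0 := by
      have h := ae_good (Q := Q) hb
      rw [MeasureTheory.ae_iff] at h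
      refine measure_mono_null (fun y hy => ?_) h
      exact fun hc => (not_le.mpr hy.2) (hc hy.1)
    have hone : (1 : ℝ≥0∞) ≤ ((k+1 : ℕ) : ℝ≥0∞) := by
      exact_mod_cast Nat.succ_le_succ (Nat.zero_le k)
    have hsplit : S ⊆ (S ∩ Bad b Q) ∪ ((Q.set \ Qh Q) ∪ Ngood) := by
      intro y hy
      by_cases hyQh : y ∈ Qh Q
      · by_cases hyBad : y ∈ Bad b Q
        · exact Or.inl ⟨hy, hyBad⟩
        · refine Or.inr (Or.inr ⟨?_, ?_⟩)
          · intro g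
            by_contra hcon
            exact hyBad ⟨hyQh, g, not_le.mp hcon⟩
          · calc lam b ≤ a := hlam_le_a
              _ = a * 1 := (mul_one _).symm
              _ ≤ a * ((k+1 : ℕ) : ℝ≥0∞) := by gcongr
              _ < F y := hy.2
      · exact Or.inr (Or.inl ⟨hy.1, hyQh⟩)
    have hbound : ∀ p : (Sel b Q), volume (Ic Q (p : ℕ × (Fin n → ℤ)) ∩ S) ≤
        2⁻¹ ^ k * volume (Ic Q (p : ℕ × (Fin n → ℤ))) := by
      rintro ⟨p, hp⟩
      obtain ⟨y, hy, h1, h2⟩ := hp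
      set R : Cube n := Ccube Q (tau b Q y) y with hR
      have hsub2 : Ic Q p ∩ S ⊆
          {z | z ∈ R.set ∧ a * (k : ℝ≥0∞) < (‖b z - cAvg b R‖₊ : ℝ≥0∞)} := by
        rintro z ⟨hz1, hz2⟩
        have hz1' : z ∈ Dc Q (tau b Q y) y := by rw [← Ic_eq_Dc h1 h2]; exact hz1
        refine ⟨Dc_subset_Ccube Q _ y hz1', ?_⟩
        have htri : F z ≤ (‖b z - cAvg b R‖₊ : ℝ≥0∞) + (‖cAvg b R - cAvg b Q‖₊ : ℝ≥0∞) := by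
          have hrw : b z - cAvg b Q = (b z - cAvg b R) + (cAvg b R - cAvg b Q) := by ring
          rw [hF]
          simp only [hrw]
          exact_mod_cast nnnorm_add_le _ _
        have havg : (‖cAvg b R - cAvg b Q‖₊ : ℝ≥0∞) ≤ a := by
          rw [← enorm_eq_nnnorm, ← ofReal_norm]
          refine le_trans (avg_sub_le hb R (cAvg b Q)) ?_
          rw [hR, volume_Ccube, ← restrict_Dc]
          exact Av_tau_le hB0 hBtop hy
        have hlt : a * (k : ℝ≥0∞) + a < (‖b z - cAvg b R‖₊ : ℝ≥0∞) + a := by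
          calc a * (k : ℝ≥0∞) + a = a * ((k+1 : ℕ) : ℝ≥0∞) := by push_cast; ring
            _ < F z := hz2.2
            _ ≤ (‖b z - cAvg b R‖₊ : ℝ≥0∞) + (‖cAvg b R - cAvg b Q‖₊ : ℝ≥0∞) := htri
            _ ≤ (‖b z - cAvg b R‖₊ : ℝ≥0∞) + a := add_le_add_right havg _
        exact (ENNReal.add_lt_add_iff_right hatop).mp hlt
      calc volume (Ic Q p ∩ S)
          ≤ volume {z | z ∈ R.set ∧ a * (k : ℝ≥0∞) < (‖b z - cAvg b R‖₊ : ℝ≥0∞)} :=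
            measure_mono hsub2
        _ ≤ 2⁻¹ ^ k * volume R.set := ih R
        _ = 2⁻¹ ^ k * volume (Ic Q p) := by rw [Ic_eq_Dc h1 h2, hR, volume_Ccube]
    calc volume S ≤ volume ((S ∩ Bad b Q) ∪ ((Q.set \ Qh Q) ∪ Ngood)) := measure_mono hsplit
      _ ≤ volume (S ∩ Bad b Q) + volume ((Q.set \ Qh Q) ∪ Ngood) := measure_union_le _ _
      _ ≤ volume (S ∩ Bad b Q) + (volume (Q.set \ Qh Q) + volume Ngood) := by
          gcongr
          exact measure_union_le _ _
      _ = volume (S ∩ Bad b Q) := by rw [hQnull, hGoodnull, add_zero, add_zero]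
      _ ≤ volume (⋃ p ∈ Sel b Q, (Ic Q p ∩ S)) := by
          refine measure_mono fun y hy => ?_
          obtain ⟨p, hp, hyp⟩ := mem_iUnion₂.mp (Bad_subset_biUnion hy.2)
          exact mem_iUnion₂.mpr ⟨p, hp, hyp, hy.1⟩
      _ ≤ ∑' p : (Sel b Q), volume (Ic Q (p : ℕ × (Fin n → ℤ)) ∩ S) :=
          measure_biUnion_le _ Sel_countable _
      _ ≤ ∑' p : (Sel b Q), 2⁻¹ ^ k * volume (Ic Q (p : ℕ × (Fin n → ℤ))) :=
          Summable.tsum_le_tsum hbound ENNReal.summable ENNReal.summable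
      _ = 2⁻¹ ^ k * ∑' p : (Sel b Q), volume (Ic Q (p : ℕ × (Fin n → ℤ))) :=
          ENNReal.tsum_mul_left
      _ ≤ 2⁻¹ ^ k * (2⁻¹ * volume Q.set) := by
          gcongr
          exact sel_sum hB0 hBtop
      _ = 2⁻¹ ^ (k+1) * volume Q.set := by rw [pow_succ, mul_assoc]

end JN

section Exp
variable {b : (Fin n → ℝ) → ℝ}

theorem exp_bound (hb : LocallyIntegrable b volume) (hB0 : bmoNorm b ≠ 0)
    (hBtop : bmoNorm b ≠ ⊤) (Q : Cube n) :
    ∫⁻ y in Q.set, ENNReal.ofReal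
        (Real.exp (‖b y - cAvg b Q‖ / (2 * (2 ^ n * lam b).toReal))) ≤
      ENNReal.ofReal 11 * volume Q.set := by
  set a : ℝ≥0∞ := 2 ^ n * lam b with ha
  have hatop : a ≠ ⊤ :=
    ENNReal.mul_ne_top (pow_ne_top (by norm_num)) (lam_lt_top hBtop).ne
  have ha0 : a ≠ 0 := by
    rw [ha]
    exact mul_ne_zero (by positivity) (lam_pos hB0).ne'
  set α : ℝ := a.toReal with hα_def
  have hα : 0 < α := ENNReal.toReal_pos ha0 hatop
  have ha_eq : a = ENNReal.ofReal α := (ENNReal.ofReal_toReal hatop).symm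
  set T : ℕ → Set (Fin n → ℝ) := fun k =>
    {z | a * ((2*(k+1) : ℕ) : ℝ≥0∞) < (‖b z - cAvg b Q‖₊ : ℝ≥0∞)} with hT
  have hFm : AEMeasurable (fun z => (‖b z - cAvg b Q‖₊ : ℝ≥0∞))
      (volume.restrict Q.set) :=
    ((hb.aestronglyMeasurable.sub aestronglyMeasurable_const).restrict).enorm
  have hTnull : ∀ k, NullMeasurableSet (T k) (volume.restrict Q.set) := fun k =>
    hFm.nullMeasurable measurableSet_Ioi
  have hTvol : ∀ k, volume.restrict Q.set (T k) ≤ 2⁻¹ ^ (2*(k+1)) * volume Q.set := by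
    intro k
    rw [Measure.restrict_apply₀ (hTnull k)]
    have : T k ∩ Q.set = {y | y ∈ Q.set ∧
        a * ((2*(k+1) : ℕ) : ℝ≥0∞) < (‖b y - cAvg b Q‖₊ : ℝ≥0∞)} := by
      ext z; exact and_comm
    rw [this]
    exact jn_distribution hb hB0 hBtop (2*(k+1)) Q
  have hpt : ∀ y, ENNReal.ofReal (Real.exp (‖b y - cAvg b Q‖ / (2 * α))) ≤
      ENNReal.ofReal (Real.exp 1) +
        ∑' k : ℕ, (T k).indicator (fun _ => ENNReal.ofReal (Real.exp ((k:ℝ)+2))) y := by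
    intro y
    set v : ℝ := ‖b y - cAvg b Q‖ with hv_def
    have hv : 0 ≤ v := norm_nonneg _
    set g : ℝ := v / (2*α) with hg_def
    have hg0 : 0 ≤ g := by positivity
    by_cases hg : g ≤ 1
    · exact le_trans (ENNReal.ofReal_le_ofReal (Real.exp_le_exp.mpr hg)) le_self_add
    · push_neg at hg
      set K := ⌈g⌉₊ with hK
      have hK2 : 2 ≤ K := by
        have : 1 < K := Nat.lt_ceil.mpr (by exact_mod_cast hg)
        omega
      set k := K - 2 with hk
      have hkk : K = k + 2 := by omega
      have hceil := Nat.le_ceil g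
      have hceil2 := Nat.ceil_lt_add_one hg0
      rw [← hK, hkk] at hceil hceil2
      push_cast at hceil hceil2
      have h1 : ((k:ℝ) + 1) < g := by linarith
      have h2 : g ≤ (k:ℝ) + 2 := by linarith
      have hveq : v = g * (2*α) := by
        rw [hg_def]; field_simp
      have hmem : y ∈ T k := by
        show a * ((2*(k+1) : ℕ) : ℝ≥0∞) < (‖b y - cAvg b Q‖₊ : ℝ≥0∞)
        rw [← enorm_eq_nnnorm, ← ofReal_norm, ha_eq, ← ENNReal.ofReal_natCast,
          ← ENNReal.ofReal_mul hα.le]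
        have hlt : α * ((2*(k+1) : ℕ) : ℝ) < v := by
          have := mul_lt_mul_of_pos_right h1 (by positivity : (0:ℝ) < 2*α)
          rw [← hveq] at this
          push_cast
          nlinarith
        exact ENNReal.ofReal_lt_ofReal_iff (by nlinarith) |>.mpr hlt
      calc ENNReal.ofReal (Real.exp g)
          ≤ (T k).indicator (fun _ => ENNReal.ofReal (Real.exp ((k:ℝ)+2))) y := by
            rw [Set.indicator_of_mem hmem]
            exact ENNReal.ofReal_le_ofReal (Real.exp_le_exp.mpr h2)
        _ ≤ ∑' k : ℕ, (T k).indicator (fun _ => ENNReal.ofReal (Real.exp ((k:ℝ)+2))) y :=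
            ENNReal.le_tsum k
        _ ≤ _ := le_add_self
  have hterm : ∀ k : ℕ, ENNReal.ofReal (Real.exp ((k:ℝ)+2)) * (2⁻¹ : ℝ≥0∞) ^ (2*(k+1)) ≤
      ENNReal.ofReal 2 * ENNReal.ofReal (3/4) ^ k := by
    intro k
    have h2inv : (2⁻¹ : ℝ≥0∞) = ENNReal.ofReal (1/2) := by
      rw [ENNReal.ofReal_div_of_pos (by norm_num), ENNReal.ofReal_one, ENNReal.ofReal_ofNat]
      norm_num
    rw [h2inv, ← ENNReal.ofReal_pow (by norm_num), ← ENNReal.ofReal_mul (Real.exp_nonneg _),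
      ← ENNReal.ofReal_pow (by norm_num), ← ENNReal.ofReal_mul (by norm_num)]
    refine ENNReal.ofReal_le_ofReal ?_
    have he : Real.exp 1 ≤ 2.7182818286 := Real.exp_one_lt_d9.le
    have hexp : Real.exp ((k:ℝ)+2) = Real.exp 1 ^ (k+2) := by
      rw [← Real.exp_nat_mul]
      push_cast
      ring_nf
    rw [hexp, pow_mul]
    have c1 : Real.exp 1 ^ 2 * ((1/2:ℝ)^2) ≤ 2 := by nlinarith [Real.exp_pos 1]
    have c2 : (Real.exp 1 * ((1/2:ℝ)^2))^k ≤ (3/4:ℝ)^k := by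
      refine pow_le_pow_left₀ (by positivity) ?_ k
      nlinarith
    calc Real.exp 1 ^ (k+2) * ((1/2:ℝ)^2)^(k+1)
        = (Real.exp 1 ^ 2 * ((1/2:ℝ)^2)) * ((Real.exp 1 * ((1/2:ℝ)^2))^k) := by
          rw [mul_pow]; ring
      _ ≤ 2 * (3/4:ℝ)^k := mul_le_mul c1 c2 (by positivity) (by norm_num)
  calc ∫⁻ y in Q.set, ENNReal.ofReal (Real.exp (‖b y - cAvg b Q‖ / (2 * α)))
      ≤ ∫⁻ y in Q.set, (ENNReal.ofReal (Real.exp 1) +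
          ∑' k : ℕ, (T k).indicator (fun _ => ENNReal.ofReal (Real.exp ((k:ℝ)+2))) y) :=
        lintegral_mono hpt
    _ = ENNReal.ofReal (Real.exp 1) * volume Q.set
        + ∑' k : ℕ, ENNReal.ofReal (Real.exp ((k:ℝ)+2)) * volume.restrict Q.set (T k) := by
        rw [lintegral_add_left measurable_const]
        congr 1
        · rw [lintegral_const, Measure.restrict_apply_univ]
        · rw [lintegral_tsum (fun k => (measurable_const.aemeasurable.indicator₀ (hTnull k)))]
          exact tsum_congr fun k => lintegral_indicator_const₀ (hTnull k) _
    _ ≤ ENNReal.ofReal (Real.exp 1) * volume Q.set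
        + ∑' k : ℕ, (ENNReal.ofReal 2 * ENNReal.ofReal (3/4) ^ k) * volume Q.set := by
        refine add_le_add_right (Summable.tsum_le_tsum (fun k => ?_) ENNReal.summable ENNReal.summable) _
        calc ENNReal.ofReal (Real.exp ((k:ℝ)+2)) * volume.restrict Q.set (T k)
            ≤ ENNReal.ofReal (Real.exp ((k:ℝ)+2)) * ((2⁻¹:ℝ≥0∞) ^ (2*(k+1)) * volume Q.set) :=
              mul_le_mul_right (hTvol k) _
          _ = (ENNReal.ofReal (Real.exp ((k:ℝ)+2)) * (2⁻¹:ℝ≥0∞) ^ (2*(k+1))) * volume Q.set := by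
              ring
          _ ≤ (ENNReal.ofReal 2 * ENNReal.ofReal (3/4) ^ k) * volume Q.set :=
              mul_le_mul_left (hterm k) _
    _ = (ENNReal.ofReal (Real.exp 1) + ENNReal.ofReal 2 * (1 - ENNReal.ofReal (3/4))⁻¹) *
          volume Q.set := by
        rw [ENNReal.tsum_mul_right, ENNReal.tsum_mul_left, ENNReal.tsum_geometric, add_mul]
    _ ≤ ENNReal.ofReal 11 * volume Q.set := by
        refine mul_le_mul_left ?_ _
        have h34 : (1 : ℝ≥0∞) - ENNReal.ofReal (3/4) = ENNReal.ofReal (1/4) := by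
          rw [← ENNReal.ofReal_one, ← ENNReal.ofReal_sub _ (by norm_num)]
          norm_num
        rw [h34, ← ENNReal.ofReal_inv_of_pos (by norm_num : (0:ℝ) < 1/4),
          ← ENNReal.ofReal_mul (by norm_num), ← ENNReal.ofReal_add (Real.exp_nonneg 1) (by norm_num)]
        refine ENNReal.ofReal_le_ofReal ?_
        have he : Real.exp 1 ≤ 2.7182818286 := Real.exp_one_lt_d9.le
        norm_num
        linarith

end Exp


lemma Phi_nonneg {t : ℝ} (ht : 0 ≤ t) : 0 ≤ Phi t := by
  unfold Phi
  nlinarith [le_max_right (Real.log t) 0]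

lemma young (s t : ℝ) (hs : 0 ≤ s) (ht : 0 ≤ t) : s * t ≤ Real.exp s + Phi t := by
  rcases le_or_gt t 1 with h | h
  · have h1 : s * t ≤ s := by nlinarith
    have h2 : s ≤ Real.exp s := by linarith [Real.add_one_le_exp s]
    linarith [Phi_nonneg ht]
  · have ht0 : 0 < t := by linarith
    have hlog : 0 ≤ Real.log t := Real.log_nonneg h.le
    have hPhi : t * Real.log t ≤ Phi t := by
      unfold Phi
      nlinarith [le_max_left (Real.log t) 0]
    have key : s * t ≤ Real.exp s + t * Real.log t := by
      rcases le_or_gt s (Real.log t) with hs' | hs'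
      · nlinarith [Real.exp_nonneg s]
      · have hu : s - Real.log t ≤ Real.exp (s - Real.log t) := by
          linarith [Real.add_one_le_exp (s - Real.log t)]
        have hexp : Real.exp s = t * Real.exp (s - Real.log t) := by
          rw [show s = Real.log t + (s - Real.log t) by ring, Real.exp_add, Real.exp_log ht0]
          ring_nf
        nlinarith [mul_le_mul_of_nonneg_left hu ht0.le]
    linarith

theorem main_estimate (b : (Fin n → ℝ) → ℝ) (hbloc : LocallyIntegrable b volume)
    (hBtop : bmoNorm b ≠ ⊤) (f : (Fin n → ℝ) → ℝ) (hf0 : ∀ x, 0 ≤ f x) (Q : Cube n) :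
    (volume Q.set)⁻¹ *
        ∫⁻ y in Q.set,
          (‖b y - ⨍ z in Q.set, b z‖₊ : ℝ≥0∞) * ENNReal.ofReal (f y) ≤
      ENNReal.ofReal (48 * 2 ^ n) * bmoNorm b * luxLlogL f Q.set := by
  by_cases hB0 : bmoNorm b = 0
  · -- degenerate case : b is a.e. constant on Q
    have hint0 : (∫⁻ y in Q.set, (‖b y - ⨍ z in Q.set, b z‖₊ : ℝ≥0∞)) = 0 := by
      have h1 : (volume Q.set)⁻¹ * ∫⁻ y in Q.set, (‖b y - ⨍ z in Q.set, b z‖₊ : ℝ≥0∞) ≤ 0 := by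
        rw [← hB0]
        exact le_iSup (fun R : Cube n =>
          (volume R.set)⁻¹ * ∫⁻ y in R.set, ‖b y - ⨍ z in R.set, b z‖₊) Q
      have h2 := nonpos_iff_eq_zero.mp h1
      rcases mul_eq_zero.mp h2 with h | h
      · exact absurd h (ENNReal.inv_ne_zero.mpr Q.volume_lt_top.ne)
      · exact h
    have hFm : AEMeasurable (fun z => (‖b z - ⨍ z in Q.set, b z‖₊ : ℝ≥0∞))
        (volume.restrict Q.set) :=
      ((hbloc.aestronglyMeasurable.sub aestronglyMeasurable_const).restrict).enorm
    have hae : ∀ᵐ y ∂(volume.restrict Q.set),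
        (‖b y - ⨍ z in Q.set, b z‖₊ : ℝ≥0∞) = 0 :=
      (lintegral_eq_zero_iff' hFm).mp hint0
    have : (∫⁻ y in Q.set,
        (‖b y - ⨍ z in Q.set, b z‖₊ : ℝ≥0∞) * ENNReal.ofReal (f y)) = 0 := by
      rw [← lintegral_zero]
      refine lintegral_congr_ae ?_
      filter_upwards [hae] with y hy
      rw [hy, zero_mul]
    rw [this, mul_zero]
    exact zero_le
  · -- main case
    set X := (volume Q.set)⁻¹ *
      ∫⁻ y in Q.set, (‖b y - ⨍ z in Q.set, b z‖₊ : ℝ≥0∞) * ENNReal.ofReal (f y) with hX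
    set cB : ℝ≥0∞ := ENNReal.ofReal (48 * 2 ^ n) * bmoNorm b with hcB
    have hcB0 : cB ≠ 0 := by
      rw [hcB]
      refine mul_ne_zero ?_ hB0
      rw [Ne, ENNReal.ofReal_eq_zero, not_le]
      positivity
    have hcBtop : cB ≠ ⊤ := ENNReal.mul_ne_top ENNReal.ofReal_ne_top hBtop
    set S := {lam : ℝ≥0∞ | lam ≠ 0 ∧
      (volume Q.set)⁻¹ * ∫⁻ y in Q.set, ENNReal.ofReal (Phi (|f y| / lam.toReal)) ≤ 1} with hSdef
    have hmain : ∀ Λ ∈ S, X ≤ cB * Λ := by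
      rintro Λ ⟨hΛ0, hΛcond⟩
      rcases eq_or_ne Λ ⊤ with rfl | hΛtop
      · rw [ENNReal.mul_top hcB0]
        exact le_top
      · -- the main computation
        set t : ℝ := Λ.toReal with htdef
        have ht : 0 < t := ENNReal.toReal_pos hΛ0 hΛtop
        set a : ℝ≥0∞ := 2 ^ n * lam b with ha
        have hatop : a ≠ ⊤ :=
          ENNReal.mul_ne_top (pow_ne_top (by norm_num)) (lam_lt_top hBtop).ne
        have ha0 : a ≠ 0 := by
          rw [ha]; exact mul_ne_zero (by positivity) (lam_pos hB0).ne'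
        set α : ℝ := a.toReal with hα_def
        have hα : 0 < α := ENNReal.toReal_pos ha0 hatop
        have hΦint : (∫⁻ y in Q.set, ENNReal.ofReal (Phi (|f y| / t))) ≤ volume Q.set := by
          calc (∫⁻ y in Q.set, ENNReal.ofReal (Phi (|f y| / t)))
              = volume Q.set * ((volume Q.set)⁻¹ *
                  ∫⁻ y in Q.set, ENNReal.ofReal (Phi (|f y| / t))) := by
                rw [← mul_assoc, ENNReal.mul_inv_cancel Q.volume_pos.ne' Q.volume_lt_top.ne,
                  one_mul]
            _ ≤ volume Q.set * 1 := by gcongr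
            _ = volume Q.set := mul_one _
        have hpt : ∀ y, (‖b y - ⨍ z in Q.set, b z‖₊ : ℝ≥0∞) * ENNReal.ofReal (f y) ≤
            ENNReal.ofReal (2 * α * t) *
              (ENNReal.ofReal (Real.exp (‖b y - cAvg b Q‖ / (2 * α))) +
                ENNReal.ofReal (Phi (|f y| / t))) := by
          intro y
          set v : ℝ := ‖b y - cAvg b Q‖ with hv
          have hv0 : 0 ≤ v := norm_nonneg _
          have hreal : v * f y ≤ (2 * α * t) *
              (Real.exp (v / (2 * α)) + Phi (|f y| / t)) := by
            have hy := young (v / (2 * α)) (|f y| / t) (by positivity) (by positivity)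
            have hfy : |f y| = f y := abs_of_nonneg (hf0 y)
            have hexpand : v * f y = (2 * α * t) * ((v / (2 * α)) * (|f y| / t)) := by
              rw [hfy]; field_simp
            rw [hexpand]
            have h2αt : 0 < 2 * α * t := by positivity
            exact mul_le_mul_of_nonneg_left hy h2αt.le
          calc (‖b y - ⨍ z in Q.set, b z‖₊ : ℝ≥0∞) * ENNReal.ofReal (f y)
              = ENNReal.ofReal (v * f y) := by
                rw [ENNReal.ofReal_mul hv0, ofReal_norm]
                rfl
            _ ≤ ENNReal.ofReal ((2 * α * t) *
                  (Real.exp (v / (2 * α)) + Phi (|f y| / t))) :=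
                ENNReal.ofReal_le_ofReal hreal
            _ = ENNReal.ofReal (2 * α * t) *
                  (ENNReal.ofReal (Real.exp (v / (2 * α))) +
                    ENNReal.ofReal (Phi (|f y| / t))) := by
                rw [ENNReal.ofReal_mul (by positivity),
                  ENNReal.ofReal_add (Real.exp_nonneg _) (Phi_nonneg (by positivity))]
        calc X ≤ (volume Q.set)⁻¹ * ∫⁻ y in Q.set, ENNReal.ofReal (2 * α * t) *
              (ENNReal.ofReal (Real.exp (‖b y - cAvg b Q‖ / (2 * α))) +
                ENNReal.ofReal (Phi (|f y| / t))) := by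
              rw [hX]; exact mul_le_mul_right (lintegral_mono hpt) _
          _ = (volume Q.set)⁻¹ * (ENNReal.ofReal (2 * α * t) *
              ((∫⁻ y in Q.set, ENNReal.ofReal (Real.exp (‖b y - cAvg b Q‖ / (2 * α)))) +
                ∫⁻ y in Q.set, ENNReal.ofReal (Phi (|f y| / t)))) := by
              have h1 : AEMeasurable (fun y => ‖b y - cAvg b Q‖ / (2*α))
                  (volume.restrict Q.set) :=
                ((hbloc.aestronglyMeasurable.sub
                  aestronglyMeasurable_const).restrict).norm.aemeasurable.div_const _
              have hexpm : AEMeasurable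
                  (fun y => ENNReal.ofReal (Real.exp (‖b y - cAvg b Q‖ / (2*α))))
                  (volume.restrict Q.set) :=
                (ENNReal.measurable_ofReal.comp Real.measurable_exp).comp_aemeasurable h1
              rw [lintegral_const_mul' _ _ ENNReal.ofReal_ne_top, lintegral_add_left' hexpm]
          _ ≤ (volume Q.set)⁻¹ * (ENNReal.ofReal (2 * α * t) *
              (ENNReal.ofReal 11 * volume Q.set + volume Q.set)) := by
              exact mul_le_mul_right (mul_le_mul_right
                (add_le_add (exp_bound hbloc hB0 hBtop Q) hΦint) _) _
          _ = ENNReal.ofReal (2 * α * t) * (ENNReal.ofReal 11 + 1) *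
                ((volume Q.set)⁻¹ * volume Q.set) := by ring
          _ = ENNReal.ofReal (2 * α * t) * (ENNReal.ofReal 11 + 1) := by
              rw [ENNReal.inv_mul_cancel Q.volume_pos.ne' Q.volume_lt_top.ne, mul_one]
          _ ≤ cB * Λ := by
              have h11 : (ENNReal.ofReal 11 + 1 : ℝ≥0∞) = ENNReal.ofReal 12 := by
                rw [← ENNReal.ofReal_one, ← ENNReal.ofReal_add] <;> norm_num
              rw [h11, ENNReal.ofReal_mul (by positivity), ENNReal.ofReal_mul (by norm_num),
                hcB]
              have hαa : ENNReal.ofReal α = a := ENNReal.ofReal_toReal hatop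
              have htΛ : ENNReal.ofReal t = Λ := ENNReal.ofReal_toReal hΛtop
              rw [hαa, htΛ, ha, lam]
              have hc48 : ENNReal.ofReal (48 * 2 ^ n) =
                  (ENNReal.ofReal 48) * (2 : ℝ≥0∞) ^ n := by
                rw [ENNReal.ofReal_mul (by norm_num), ENNReal.ofReal_pow (by norm_num)]
                norm_num
              rw [hc48]
              have : ENNReal.ofReal 2 * (2 ^ n * (2 * bmoNorm b)) * Λ * ENNReal.ofReal 12 =
                  (ENNReal.ofReal 2 * 2 * ENNReal.ofReal 12) * 2 ^ n * bmoNorm b * Λ := by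
                ring
              rw [this]
              gcongr
              simp only [ENNReal.ofReal_ofNat]
              norm_num
    -- pass to the infimum
    have hSne : S.Nonempty := by
      refine ⟨⊤, by simp, ?_⟩
      simp only [ENNReal.toReal_top, _root_.div_zero]
      have : Phi 0 = 0 := by simp [Phi]
      simp [this]
    rw [show luxLlogL f Q.set = sInf S from rfl]
    have : cB * sInf S = ⨅ Λ : S, cB * (Λ : ℝ≥0∞) := by
      rw [sInf_eq_iInf']
      exact ENNReal.mul_iInf_of_ne hcB0 hcBtop
    rw [this]
    haveI : Nonempty S := hSne.to_subtype
    exact le_iInf fun Λ => hmain Λ.1 Λ.2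

end AuxJN

/-- the generalized Hölder/John–Nirenberg estimate
`|Q|⁻¹ ∫_Q |b - b_Q| f ≤ c ‖b‖_{BMO} ‖f‖_{L log L, Q}`. -/
theorem bmo_times_LlogL_average (n : ℕ) :
    ∃ c : ℝ, 0 < c ∧
      ∀ b : (Fin n → ℝ) → ℝ, IsBMO b →
      ∀ f : (Fin n → ℝ) → ℝ, Measurable f → (∀ x, 0 ≤ f x) →
        LocallyIntegrable f volume →
      ∀ Q : Cube n,
        (volume Q.set)⁻¹ *
            ∫⁻ y in Q.set,
              (‖b y - ⨍ z in Q.set, b z‖₊ : ℝ≥0∞) * ENNReal.ofReal (f y) ≤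
          ENNReal.ofReal c * bmoNorm b * luxLlogL f Q.set := by
  refine ⟨48 * 2 ^ n, by positivity, ?_⟩
  intro b hb f _hfm hf0 _hfl Q
  exact main_estimate b hb.1 hb.2 f hf0 Q

end
end

section
/- Let 0 < ε₀ < ε < 1. Then there exists a constant c = c(ε₀,ε) such that for every locally integrable function f on ℝⁿ and every x ∈ ℝⁿ, M^{#,d}_{ε₀}(M^d_ε f)(x) ≤ c · M^{#,d}_ε f(x). -/
open MeasureTheory ENNReal Set

noncomputable section

variable {n : ℕ}

namespace DyadicAux

variable {n : ℕ}

lemma two_zpow_pos (k : ℤ) : (0:ℝ) < 2 ^ k := zpow_pos (by norm_num) _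

/-- index of the level-`k` dyadic cube containing `x`. -/
def dmOf (n : ℕ) (k : ℤ) (x : Fin n → ℝ) : Fin n → ℤ := fun i => ⌊x i / (2:ℝ)^k⌋

lemma mem_dyadicCube_iff {k : ℤ} {m : Fin n → ℤ} {x : Fin n → ℝ} :
    x ∈ dyadicCube n k m ↔ m = dmOf n k x := by
  constructor
  · intro hx
    funext i
    obtain ⟨h1, h2⟩ := hx i
    have hp := two_zpow_pos k
    symm
    rw [dmOf, Int.floor_eq_iff]
    constructor
    · rwa [le_div_iff₀ hp]
    · rw [div_lt_iff₀ hp]; push_cast; linarith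
  · rintro rfl i
    have hp := two_zpow_pos k
    have h1 : (⌊x i / (2:ℝ)^k⌋ : ℝ) ≤ x i / 2^k := Int.floor_le _
    have h2 : x i / 2^k < ⌊x i / (2:ℝ)^k⌋ + 1 := Int.lt_floor_add_one _
    constructor
    · calc ((dmOf n k x i : ℝ)) * 2^k ≤ (x i / 2^k) * 2^k := by
            exact mul_le_mul_of_nonneg_right h1 hp.le
        _ = x i := div_mul_cancel₀ _ hp.ne'
    · calc x i = (x i / 2^k) * 2^k := (div_mul_cancel₀ _ hp.ne').symm
        _ < ((dmOf n k x i : ℝ) + 1) * 2^k := by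
            apply mul_lt_mul_of_pos_right _ hp
            push_cast
            exact h2

lemma mem_dmOf (k : ℤ) (x : Fin n → ℝ) : x ∈ dyadicCube n k (dmOf n k x) :=
  mem_dyadicCube_iff.2 rfl

lemma dyadicCube_subset {k k' : ℤ} {m m' : Fin n → ℤ} (hk : k ≤ k') {x : Fin n → ℝ}
    (hx : x ∈ dyadicCube n k m) (hx' : x ∈ dyadicCube n k' m') :
    dyadicCube n k m ⊆ dyadicCube n k' m' := by
  intro y hy i
  have hp := two_zpow_pos k
  have hp' := two_zpow_pos k'
  set D : ℕ := (k' - k).toNat with hD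
  have hDk : (2:ℝ)^k' = 2^k * 2^D := by
    rw [← zpow_natCast, hD, Int.toNat_of_nonneg (by omega), ← zpow_add₀ (by norm_num : (2:ℝ) ≠ 0)]
    ring_nf
  obtain ⟨a1, a2⟩ := hx i
  obtain ⟨b1, b2⟩ := hx' i
  -- integer inequalities
  have key1 : (m' i) * 2^D ≤ m i := by
    have : ((m' i : ℝ)) * 2^D * 2^k ≤ x i := by rw [mul_assoc, mul_comm ((2:ℝ)^D), ← hDk]; exact b1
    have h2 : ((m' i : ℝ)) * 2^D < (m i : ℝ) + 1 := by
      nlinarith [a2, this]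
    have : ((m' i * 2^D : ℤ) : ℝ) < ((m i + 1 : ℤ) : ℝ) := by push_cast; push_cast at h2; linarith
    exact_mod_cast Int.lt_add_one_iff.mp (by exact_mod_cast this)
  have key2 : m i + 1 ≤ (m' i + 1) * 2^D := by
    have hx2 : x i < ((m' i : ℝ) + 1) * 2^D * 2^k := by
      rw [mul_assoc, mul_comm ((2:ℝ)^D), ← hDk]; exact b2
    have h2 : (m i : ℝ) < ((m' i : ℝ) + 1) * 2^D := by nlinarith [a1, hx2]
    have : ((m i : ℤ) : ℝ) < (((m' i + 1) * 2^D : ℤ) : ℝ) := by push_cast; push_cast at h2; linarith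
    exact Int.lt_iff_add_one_le.mp (by exact_mod_cast this)
  obtain ⟨c1, c2⟩ := hy i
  constructor
  · calc ((m' i : ℝ)) * 2^k' = (m' i : ℝ) * 2^D * 2^k := by rw [hDk]; ring
      _ ≤ (m i : ℝ) * 2^k := by
          apply mul_le_mul_of_nonneg_right _ hp.le
          exact_mod_cast (by exact_mod_cast key1 : ((m' i * 2^D : ℤ) : ℝ) ≤ (m i : ℤ))
      _ ≤ y i := c1
  · calc y i < ((m i : ℝ) + 1) * 2^k := c2
      _ ≤ ((m' i : ℝ) + 1) * 2^D * 2^k := by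
          apply mul_le_mul_of_nonneg_right _ hp.le
          have : ((m i + 1 : ℤ) : ℝ) ≤ (((m' i + 1) * 2^D : ℤ) : ℝ) := by exact_mod_cast key2
          push_cast at this ⊢; linarith
      _ = ((m' i : ℝ) + 1) * 2^k' := by rw [hDk]; ring

lemma dyadicCube_eq_pi (k : ℤ) (m : Fin n → ℤ) :
    dyadicCube n k m = Set.pi Set.univ (fun i => Set.Ico ((m i : ℝ) * 2^k) (((m i : ℝ)+1) * 2^k)) := by
  ext y
  simp [dyadicCube, Set.mem_pi, Set.mem_Ico]

lemma measurableSet_dyadicCube (k : ℤ) (m : Fin n → ℤ) :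
    MeasurableSet (dyadicCube n k m) := by
  rw [dyadicCube_eq_pi]
  exact MeasurableSet.univ_pi (fun i => measurableSet_Ico)

lemma volume_dyadicCube (k : ℤ) (m : Fin n → ℤ) :
    volume (dyadicCube n k m) = (ENNReal.ofReal ((2:ℝ)^k)) ^ n := by
  rw [dyadicCube_eq_pi, volume_pi_pi]
  have : ∀ i : Fin n, volume (Set.Ico ((m i : ℝ) * 2^k) (((m i : ℝ)+1) * 2^k))
      = ENNReal.ofReal ((2:ℝ)^k) := by
    intro i
    rw [Real.volume_Ico]
    congr 1
    ring
  simp [this]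

lemma volume_dyadicCube_pos (k : ℤ) (m : Fin n → ℤ) : 0 < volume (dyadicCube n k m) := by
  rw [volume_dyadicCube, pos_iff_ne_zero]
  exact pow_ne_zero _ (by simp [ENNReal.ofReal_pos.2 (two_zpow_pos k), ne_of_gt, (ENNReal.ofReal_pos.2 (two_zpow_pos k)).ne'])

lemma volume_dyadicCube_ne_top (k : ℤ) (m : Fin n → ℤ) : volume (dyadicCube n k m) ≠ ⊤ := by
  rw [volume_dyadicCube]
  exact (pow_ne_top ENNReal.ofReal_ne_top)

lemma volume_dyadicCube_mono {k k' : ℤ} (hk : k ≤ k') (m m' : Fin n → ℤ) :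
    volume (dyadicCube n k m) ≤ volume (dyadicCube n k' m') := by
  rw [volume_dyadicCube, volume_dyadicCube]
  exact pow_le_pow_left₀ zero_le (ENNReal.ofReal_le_ofReal (by
    apply zpow_le_zpow_right₀ (by norm_num) hk)) n

/-- average of `g` over the dyadic cube. -/
def davg (n : ℕ) (k : ℤ) (m : Fin n → ℤ) (g : (Fin n → ℝ) → ℝ≥0∞) : ℝ≥0∞ :=
  (volume (dyadicCube n k m))⁻¹ * ∫⁻ y in dyadicCube n k m, g y

lemma dyadicMaximalE_def (g : (Fin n → ℝ) → ℝ≥0∞) (x : Fin n → ℝ) :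
    dyadicMaximalE g x = ⨆ (k : ℤ) (m : Fin n → ℤ) (_ : x ∈ dyadicCube n k m), davg n k m g :=
  rfl

lemma le_dyadicMaximalE {k : ℤ} {m : Fin n → ℤ} {x : Fin n → ℝ}
    (hx : x ∈ dyadicCube n k m) (g : (Fin n → ℝ) → ℝ≥0∞) :
    davg n k m g ≤ dyadicMaximalE g x := by
  rw [dyadicMaximalE_def]
  exact le_iSup₂_of_le k m (le_iSup_of_le hx le_rfl)

lemma dyadicMaximalE_le {g : (Fin n → ℝ) → ℝ≥0∞} {x : Fin n → ℝ} {c : ℝ≥0∞}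
    (h : ∀ k m, x ∈ dyadicCube n k m → davg n k m g ≤ c) :
    dyadicMaximalE g x ≤ c :=
  iSup_le fun k => iSup_le fun m => iSup_le fun hx => h k m hx

lemma davg_mono {g₁ g₂ : (Fin n → ℝ) → ℝ≥0∞} (h : ∀ y, g₁ y ≤ g₂ y) (k : ℤ) (m : Fin n → ℤ) :
    davg n k m g₁ ≤ davg n k m g₂ :=
  mul_le_mul_right (lintegral_mono h) _

lemma dyadicMaximalE_mono {g₁ g₂ : (Fin n → ℝ) → ℝ≥0∞} (h : ∀ y, g₁ y ≤ g₂ y) (x : Fin n → ℝ) :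
    dyadicMaximalE g₁ x ≤ dyadicMaximalE g₂ x :=
  dyadicMaximalE_le fun k m hx => (davg_mono h k m).trans (le_dyadicMaximalE hx g₂)

lemma measurable_dyadicMaximalE (g : (Fin n → ℝ) → ℝ≥0∞) :
    Measurable (dyadicMaximalE g) := by
  have h : dyadicMaximalE g = fun x => ⨆ (k : ℤ) (m : Fin n → ℤ),
      (dyadicCube n k m).indicator (fun _ => davg n k m g) x := by
    funext x
    rw [dyadicMaximalE_def]
    refine iSup_congr fun k => iSup_congr fun m => ?_
    by_cases hx : x ∈ dyadicCube n k m <;> simp [hx]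
  rw [h]
  exact Measurable.iSup fun k => Measurable.iSup fun m =>
    measurable_const.indicator (measurableSet_dyadicCube k m)

lemma davg_indicator_const_le (k : ℤ) (m : Fin n → ℤ) (S : Set (Fin n → ℝ)) (c : ℝ≥0∞) :
    davg n k m (S.indicator (fun _ => c)) ≤ c := by
  rw [davg]
  have h1 : (∫⁻ y in dyadicCube n k m, S.indicator (fun _ => c) y)
      ≤ ∫⁻ _ in dyadicCube n k m, c :=
    lintegral_mono (fun y => Set.indicator_le_self' (fun _ _ => zero_le) y)
  calc (volume (dyadicCube n k m))⁻¹ * ∫⁻ y in dyadicCube n k m, S.indicator (fun _ => c) y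
      ≤ (volume (dyadicCube n k m))⁻¹ * (c * volume (dyadicCube n k m)) := by
        rw [MeasureTheory.setLIntegral_const] at h1
        exact mul_le_mul_right h1 _
    _ ≤ c := by
        rw [mul_comm c, ← mul_assoc, ENNReal.inv_mul_cancel (volume_dyadicCube_pos k m).ne'
          (volume_dyadicCube_ne_top k m), one_mul]

lemma davg_add_le (k : ℤ) (m : Fin n → ℤ) (g₁ g₂ : (Fin n → ℝ) → ℝ≥0∞)
    (hg₁ : AEMeasurable g₁ volume) :
    davg n k m (fun y => g₁ y + g₂ y) ≤ davg n k m g₁ + davg n k m g₂ := by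
  rw [davg, davg, davg, ← mul_add]
  apply mul_le_mul_right
  rw [lintegral_add_left' (hg₁.restrict)]


/-- corner of a dyadic cube -/
def dcorner (n : ℕ) (k : ℤ) (m : Fin n → ℤ) : Fin n → ℝ := fun i => (m i : ℝ) * 2^k

lemma dcorner_mem (k : ℤ) (m : Fin n → ℤ) : dcorner n k m ∈ dyadicCube n k m := by
  intro i
  have hp := two_zpow_pos k
  refine ⟨le_refl _, ?_⟩
  have : (m i : ℝ) < (m i : ℝ) + 1 := by linarith
  exact mul_lt_mul_of_pos_right this hp

lemma lintegral_eq_of_zero_off {k₀ : ℤ} {m₀ : Fin n → ℤ} {φ : (Fin n → ℝ) → ℝ≥0∞}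
    (hφ : ∀ y, y ∉ dyadicCube n k₀ m₀ → φ y = 0) :
    (∫⁻ y, φ y) = ∫⁻ y in dyadicCube n k₀ m₀, φ y := by
  have h : φ = (dyadicCube n k₀ m₀).indicator φ := by
    funext y
    by_cases hy : y ∈ dyadicCube n k₀ m₀
    · simp [hy]
    · simp [hy, hφ y hy]
  conv_lhs => rw [h]
  exact lintegral_indicator (measurableSet_dyadicCube k₀ m₀) φ

/-- levels at least `k₀` have small averages -/
lemma davg_le_of_level_ge {k₀ : ℤ} {m₀ : Fin n → ℤ} {φ : (Fin n → ℝ) → ℝ≥0∞}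
    (hφ : ∀ y, y ∉ dyadicCube n k₀ m₀ → φ y = 0) {lam : ℝ≥0∞}
    (hlam : (volume (dyadicCube n k₀ m₀))⁻¹ * (∫⁻ y in dyadicCube n k₀ m₀, φ y) ≤ lam)
    {k : ℤ} (hk : k₀ ≤ k) (m : Fin n → ℤ) :
    davg n k m φ ≤ lam := by
  refine le_trans ?_ hlam
  rw [davg]
  have h1 : (∫⁻ y in dyadicCube n k m, φ y) ≤ ∫⁻ y in dyadicCube n k₀ m₀, φ y := by
    rw [← lintegral_eq_of_zero_off hφ]
    exact setLIntegral_le_lintegral _ _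
  calc (volume (dyadicCube n k m))⁻¹ * ∫⁻ y in dyadicCube n k m, φ y
      ≤ (volume (dyadicCube n k₀ m₀))⁻¹ * ∫⁻ y in dyadicCube n k₀ m₀, φ y := by
        exact mul_le_mul' (ENNReal.inv_le_inv.2 (volume_dyadicCube_mono hk m₀ m)) h1

/-- the local dyadic weak (1,1) inequality -/
lemma weak11 {k₀ : ℤ} {m₀ : Fin n → ℤ} {φ : (Fin n → ℝ) → ℝ≥0∞}
    (hφ : ∀ y, y ∉ dyadicCube n k₀ m₀ → φ y = 0) {lam : ℝ≥0∞}
    (hlam : (volume (dyadicCube n k₀ m₀))⁻¹ * (∫⁻ y in dyadicCube n k₀ m₀, φ y) ≤ lam) :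
    volume {y | lam < dyadicMaximalE φ y} ≤ lam⁻¹ * ∫⁻ y in dyadicCube n k₀ m₀, φ y := by
  by_cases hlamtop : lam = ⊤
  · have : {y | lam < dyadicMaximalE φ y} = ∅ := by
      ext y; simp [hlamtop]
    simp [this]
  -- the set of maximal cubes
  set S : Set (ℤ × (Fin n → ℤ)) :=
    {p | lam < davg n p.1 p.2 φ ∧
      ∀ k', p.1 < k' → davg n k' (dmOf n k' (dcorner n p.1 p.2)) φ ≤ lam} with hS
  -- covering
  have hcover : {y | lam < dyadicMaximalE φ y} ⊆ ⋃ p : S, dyadicCube n p.1.1 p.1.2 := by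
    intro y hy
    simp only [Set.mem_setOf_eq, dyadicMaximalE_def] at hy
    rw [lt_iSup_iff] at hy
    obtain ⟨k₁, hk₁⟩ := hy
    rw [lt_iSup_iff] at hk₁
    obtain ⟨m₁, hm₁⟩ := hk₁
    rw [lt_iSup_iff] at hm₁
    obtain ⟨hy₁, hd₁⟩ := hm₁
    have hm₁y : m₁ = dmOf n k₁ y := mem_dyadicCube_iff.1 hy₁
    -- the levels with big averages
    have hbdd : ∀ k : ℤ, lam < davg n k (dmOf n k y) φ → k ≤ k₀ - 1 := by
      intro k hk
      by_contra hcon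
      exact absurd (davg_le_of_level_ge hφ hlam (by omega) (dmOf n k y)) (not_le.2 hk)
    obtain ⟨ks, hks, hksmax⟩ := Int.exists_greatest_of_bdd
      (P := fun k => lam < davg n k (dmOf n k y) φ)
      ⟨k₀ - 1, fun z hz => hbdd z hz⟩ ⟨k₁, by rwa [hm₁y] at hd₁⟩
    refine Set.mem_iUnion.2 ⟨⟨(ks, dmOf n ks y), ?_, ?_⟩, mem_dmOf ks y⟩
    · exact hks
    · intro k' hk'
      have hsub : dyadicCube n ks (dmOf n ks y) ⊆ dyadicCube n k' (dmOf n k' y) :=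
        dyadicCube_subset (le_of_lt hk') (mem_dmOf ks y) (mem_dmOf k' y)
      have hcc : dcorner n ks (dmOf n ks y) ∈ dyadicCube n k' (dmOf n k' y) :=
        hsub (dcorner_mem _ _)
      have : dmOf n k' y = dmOf n k' (dcorner n ks (dmOf n ks y)) := mem_dyadicCube_iff.1 hcc
      rw [← this]
      by_contra hcon
      have := hksmax k' (not_le.1 hcon |> fun h => by exact lt_of_not_ge hcon)
      omega
  -- disjointness
  have hdisj : Pairwise (Function.onFun Disjoint fun p : S => dyadicCube n p.1.1 p.1.2) := by
    have key : ∀ p q : ℤ × (Fin n → ℤ), p ∈ S → q ∈ S → p.1 ≤ q.1 →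
        ¬ Disjoint (dyadicCube n p.1 p.2) (dyadicCube n q.1 q.2) → p = q := by
      rintro ⟨k, m⟩ ⟨k', m'⟩ hp hq hle hnd
      obtain ⟨z, hz1, hz2⟩ := Set.not_disjoint_iff.1 hnd
      rcases eq_or_lt_of_le hle with heq | hlt
      · simp only at heq
        subst heq
        have hmm : m = m' := (mem_dyadicCube_iff.1 hz1).trans (mem_dyadicCube_iff.1 hz2).symm
        simp [Prod.ext_iff, hmm]
      · exfalso
        have hsub : dyadicCube n k m ⊆ dyadicCube n k' m' := dyadicCube_subset hle hz1 hz2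
        have hcc : dcorner n k m ∈ dyadicCube n k' m' := hsub (dcorner_mem _ _)
        have hm' : m' = dmOf n k' (dcorner n k m) := mem_dyadicCube_iff.1 hcc
        have h1 := hp.2 k' hlt
        rw [← hm'] at h1
        exact absurd h1 (not_le.2 hq.1)
    intro p q hpq
    simp only [Function.onFun]
    by_contra hnd
    have h1 : p.1.1 ≤ q.1.1 ∨ q.1.1 ≤ p.1.1 := le_total _ _
    rcases h1 with h | h
    · exact hpq (Subtype.ext (key p.1 q.1 p.2 q.2 h hnd))
    · exact hpq (Subtype.ext (key q.1 p.1 q.2 p.2 h (fun hd => hnd hd.symm)).symm)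
  -- volume bound
  calc volume {y | lam < dyadicMaximalE φ y}
      ≤ volume (⋃ p : S, dyadicCube n p.1.1 p.1.2) := measure_mono hcover
    _ ≤ ∑' p : S, volume (dyadicCube n p.1.1 p.1.2) := measure_iUnion_le _
    _ ≤ ∑' p : S, lam⁻¹ * ∫⁻ y in dyadicCube n p.1.1 p.1.2, φ y := by
        apply ENNReal.tsum_le_tsum
        rintro ⟨⟨k, m⟩, hp, -⟩
        show volume (dyadicCube n k m) ≤ lam⁻¹ * ∫⁻ y in dyadicCube n k m, φ y
        have hvol0 := (volume_dyadicCube_pos k m).ne'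
        have hvolt := volume_dyadicCube_ne_top k m
        by_cases hlam0 : lam = 0
        · have hint : ∫⁻ y in dyadicCube n k m, φ y ≠ 0 := by
            intro h0
            rw [davg, h0, mul_zero, hlam0] at hp
            exact (lt_irrefl 0) hp
          rw [hlam0, ENNReal.inv_zero, ENNReal.top_mul hint]
          exact le_top
        have h2 : lam * volume (dyadicCube n k m) ≤ ∫⁻ y in dyadicCube n k m, φ y := by
          have := le_of_lt hp
          rw [davg] at this
          calc lam * volume (dyadicCube n k m)
              ≤ ((volume (dyadicCube n k m))⁻¹ * ∫⁻ y in dyadicCube n k m, φ y)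
                * volume (dyadicCube n k m) := mul_le_mul_left this _
            _ = ∫⁻ y in dyadicCube n k m, φ y := by
                rw [mul_comm _ (∫⁻ y in dyadicCube n k m, φ y), mul_assoc,
                  ENNReal.inv_mul_cancel hvol0 hvolt, mul_one]
        calc volume (dyadicCube n k m) = lam⁻¹ * (lam * volume (dyadicCube n k m)) := by
              rw [← mul_assoc, ENNReal.inv_mul_cancel hlam0 hlamtop, one_mul]
          _ ≤ lam⁻¹ * ∫⁻ y in dyadicCube n k m, φ y := mul_le_mul_right h2 _
    _ = lam⁻¹ * ∑' p : S, ∫⁻ y in dyadicCube n p.1.1 p.1.2, φ y := ENNReal.tsum_mul_left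
    _ ≤ lam⁻¹ * ∫⁻ y in dyadicCube n k₀ m₀, φ y := by
        apply mul_le_mul_right
        rw [← lintegral_iUnion (fun p => measurableSet_dyadicCube _ _) hdisj]
        rw [← lintegral_eq_of_zero_off hφ]
        exact setLIntegral_le_lintegral _ _


lemma pow_rpow_comm (x : ℝ≥0∞) (a : ℝ) (j : ℕ) : (x ^ j) ^ a = (x ^ a) ^ j := by
  rw [← ENNReal.rpow_natCast x j, ← ENNReal.rpow_mul, mul_comm (j:ℝ) a, ENNReal.rpow_mul,
    ENNReal.rpow_natCast]

lemma exists_pow_two_lt {u t : ℝ≥0∞} (ht0 : t ≠ 0) (htt : t ≠ ⊤) (hu : u ≠ ⊤) (htu : t < u) :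
    ∃ j : ℕ, 2^j * t < u ∧ u ≤ 2^(j+1) * t := by
  have hex : ∃ j : ℕ, u ≤ 2^j * t := by
    obtain ⟨N, hN⟩ := ENNReal.exists_nat_gt (show u/t ≠ ⊤ from (ENNReal.div_lt_top hu ht0).ne)
    refine ⟨N, ?_⟩
    have h2 : ((N:ℕ) : ℝ≥0∞) ≤ 2^N := by
      have := (Nat.lt_two_pow_self (n := N)).le
      exact_mod_cast (by exact_mod_cast this : ((N:ℕ):ℝ≥0∞) ≤ ((2^N : ℕ) : ℝ≥0∞))
    have h1 : u / t ≤ 2^N := le_trans hN.le h2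
    rwa [ENNReal.div_le_iff_le_mul (Or.inl ht0) (Or.inl htt)] at h1
  have h0 : ¬ (u ≤ 2^0 * t) := by
    rw [pow_zero, one_mul]
    exact not_le.2 htu
  set j₀ := Nat.find hex with hj₀
  have hj₀0 : j₀ ≠ 0 := by
    intro h
    apply h0
    have := Nat.find_spec hex
    rwa [← hj₀, h] at this
  refine ⟨j₀ - 1, ?_, ?_⟩
  · have := Nat.find_min hex (m := j₀ - 1) (by omega)
    exact not_le.1 this
  · have : j₀ - 1 + 1 = j₀ := by omega
    rw [this]
    exact Nat.find_spec hex

lemma pointwise_rpow_le {θ : ℝ} (hθ0 : 0 < θ) (u t : ℝ≥0∞) (ht0 : t ≠ 0) (htt : t ≠ ⊤) :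
    u ^ θ ≤ t ^ θ + ∑' j : ℕ, (if 2^j * t < u then ((2:ℝ≥0∞)^(j+1) * t)^θ else 0) := by
  by_cases hut : u ≤ t
  · exact le_add_right (ENNReal.rpow_le_rpow hut hθ0.le)
  push_neg at hut
  have hterm_ne : ∀ j : ℕ, ((2:ℝ≥0∞)^(j+1) * t)^θ ≠ 0 := by
    intro j
    refine (ENNReal.rpow_pos ?_ ?_).ne'
    · exact pos_iff_ne_zero.2 (mul_ne_zero (pow_ne_zero _ (by norm_num)) ht0)
    · exact ENNReal.mul_ne_top (pow_ne_top (by norm_num)) htt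
  by_cases hu : u = ⊤
  · have hall : ∀ j : ℕ, (if 2^j * t < u then ((2:ℝ≥0∞)^(j+1) * t)^θ else 0)
        = ((2:ℝ≥0∞)^(j+1) * t)^θ := by
      intro j
      rw [if_pos]
      rw [hu]
      exact (ENNReal.mul_ne_top (pow_ne_top (by norm_num)) htt).lt_top
    rw [tsum_congr hall]
    have hge : ∀ j : ℕ, t^θ ≤ ((2:ℝ≥0∞)^(j+1) * t)^θ := by
      intro j
      apply ENNReal.rpow_le_rpow _ hθ0.le
      exact le_mul_of_one_le_left zero_le (one_le_pow_of_one_le' (by norm_num : (1:ℝ≥0∞) ≤ 2) (j+1))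
    have htop : ∑' j : ℕ, ((2:ℝ≥0∞)^(j+1) * t)^θ = ⊤ := by
      rw [eq_top_iff]
      calc (⊤:ℝ≥0∞) = ∑' _ : ℕ, t^θ :=
            (ENNReal.tsum_const_eq_top_of_ne_zero
              (ENNReal.rpow_pos (pos_iff_ne_zero.2 ht0) htt).ne').symm
        _ ≤ _ := ENNReal.tsum_le_tsum hge
    rw [htop]
    simp
  · obtain ⟨j, hj1, hj2⟩ := exists_pow_two_lt ht0 htt hu hut
    have : u ^ θ ≤ (if 2^j * t < u then ((2:ℝ≥0∞)^(j+1) * t)^θ else 0) := by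
      rw [if_pos hj1]
      exact ENNReal.rpow_le_rpow hj2 hθ0.le
    exact le_add_left (this.trans (ENNReal.le_tsum j))


lemma kolmogorov {θ : ℝ} (hθ0 : 0 < θ) (hθ1 : θ < 1) {k₀ : ℤ} {m₀ : Fin n → ℤ}
    {φ : (Fin n → ℝ) → ℝ≥0∞} (hφ : ∀ y, y ∉ dyadicCube n k₀ m₀ → φ y = 0) :
    ∫⁻ y in dyadicCube n k₀ m₀, (dyadicMaximalE φ y) ^ θ ≤
      (1 + (2:ℝ≥0∞)^θ * (1 - (2:ℝ≥0∞)^(θ-1))⁻¹) * volume (dyadicCube n k₀ m₀) *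
        ((volume (dyadicCube n k₀ m₀))⁻¹ * ∫⁻ y in dyadicCube n k₀ m₀, φ y) ^ θ := by
  set Q₀ := dyadicCube n k₀ m₀ with hQ₀
  set V := volume Q₀ with hV
  set H := ∫⁻ y in Q₀, φ y with hH
  have hV0 : V ≠ 0 := (volume_dyadicCube_pos k₀ m₀).ne'
  have hVt : V ≠ ⊤ := volume_dyadicCube_ne_top k₀ m₀
  set t := V⁻¹ * H with ht
  by_cases hH0 : H = 0
  · have hzero : ∀ y, (dyadicMaximalE φ y) ^ θ = 0 := by
      intro y
      have h1 : dyadicMaximalE φ y ≤ 0 := by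
        apply dyadicMaximalE_le
        intro k m hx
        have h2 : (∫⁻ z in dyadicCube n k m, φ z) ≤ H := by
          rw [hH, ← lintegral_eq_of_zero_off hφ]
          exact setLIntegral_le_lintegral _ _
        rw [davg]
        calc (volume (dyadicCube n k m))⁻¹ * ∫⁻ z in dyadicCube n k m, φ z
            ≤ (volume (dyadicCube n k m))⁻¹ * H := mul_le_mul_right h2 _
          _ = 0 := by rw [hH0, mul_zero]
      rw [le_zero_iff.1 h1]
      exact ENNReal.zero_rpow_of_pos hθ0
    calc ∫⁻ y in Q₀, (dyadicMaximalE φ y) ^ θ = ∫⁻ _ in Q₀, 0 := by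
          apply lintegral_congr
          intro y
          exact hzero y
      _ = 0 := lintegral_zero
      _ ≤ _ := zero_le
  by_cases hHt : H = ⊤
  · have htt : t = ⊤ := by
      rw [ht, hHt, ENNReal.mul_top (ENNReal.inv_ne_zero.2 hVt)]
    have hRHS : (1 + (2:ℝ≥0∞)^θ * (1 - (2:ℝ≥0∞)^(θ-1))⁻¹) * V * t ^ θ = ⊤ := by
      rw [htt, ENNReal.top_rpow_of_pos hθ0, ENNReal.mul_top]
      exact mul_ne_zero (by simp) hV0
    rw [hRHS]
    exact le_top
  -- main case
  have ht0 : t ≠ 0 := mul_ne_zero (ENNReal.inv_ne_zero.2 hVt) hH0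
  have htt : t ≠ ⊤ := ENNReal.mul_ne_top (ENNReal.inv_ne_top.2 hV0) hHt
  set r := (2:ℝ≥0∞)^(θ-1) with hr
  have hr1 : r < 1 := ENNReal.rpow_lt_one_of_one_lt_of_neg (by norm_num) (by linarith)
  have hmeas : ∀ j : ℕ, MeasurableSet {y : Fin n → ℝ | 2^j * t < dyadicMaximalE φ y} :=
    fun j => measurableSet_lt measurable_const (measurable_dyadicMaximalE φ)
  have step1 : ∫⁻ y in Q₀, (dyadicMaximalE φ y) ^ θ ≤
      ∫⁻ y in Q₀, (t^θ + ∑' j : ℕ,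
        ({y : Fin n → ℝ | 2^j * t < dyadicMaximalE φ y}.indicator
          (fun _ => ((2:ℝ≥0∞)^(j+1) * t)^θ)) y) := by
    apply lintegral_mono
    intro y
    have := pointwise_rpow_le hθ0 (dyadicMaximalE φ y) t ht0 htt
    refine this.trans ?_
    apply add_le_add_right
    apply ENNReal.tsum_le_tsum
    intro j
    rw [Set.indicator_apply]
    simp only [Set.mem_setOf_eq]
    exact le_rfl
  have step2 : ∫⁻ y in Q₀, (t^θ + ∑' j : ℕ,
        ({y : Fin n → ℝ | 2^j * t < dyadicMaximalE φ y}.indicator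
          (fun _ => ((2:ℝ≥0∞)^(j+1) * t)^θ)) y)
      = t^θ * V + ∑' j : ℕ, ∫⁻ y in Q₀,
        ({y : Fin n → ℝ | 2^j * t < dyadicMaximalE φ y}.indicator
          (fun _ => ((2:ℝ≥0∞)^(j+1) * t)^θ)) y := by
    rw [lintegral_add_left measurable_const, MeasureTheory.setLIntegral_const,
      lintegral_tsum]
    intro j
    exact (measurable_const.indicator (hmeas j)).aemeasurable
  have step3 : ∀ j : ℕ, (∫⁻ y in Q₀,
        ({y : Fin n → ℝ | 2^j * t < dyadicMaximalE φ y}.indicator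
          (fun _ => ((2:ℝ≥0∞)^(j+1) * t)^θ)) y)
      ≤ ((2:ℝ≥0∞)^(j+1) * t)^θ * ((2^j * t)⁻¹ * H) := by
    intro j
    rw [lintegral_indicator_const (hmeas j)]
    apply mul_le_mul_right
    have h1 : (volume.restrict Q₀) {y : Fin n → ℝ | 2^j * t < dyadicMaximalE φ y}
        ≤ volume {y : Fin n → ℝ | 2^j * t < dyadicMaximalE φ y} := by
      rw [Measure.restrict_apply (hmeas j)]
      exact measure_mono Set.inter_subset_left
    refine h1.trans ?_
    have hlam : V⁻¹ * H ≤ 2^j * t := by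
      rw [← ht]
      exact le_mul_of_one_le_left zero_le
        (one_le_pow_of_one_le' (by norm_num : (1:ℝ≥0∞) ≤ 2) j)
    exact weak11 hφ hlam
  have step4 : ∀ j : ℕ, ((2:ℝ≥0∞)^(j+1) * t)^θ * ((2^j * t)⁻¹ * H)
      = ((2:ℝ≥0∞)^θ * (t^θ * V)) * r^j := by
    intro j
    have h2j0 : ((2:ℝ≥0∞))^j ≠ 0 := pow_ne_zero j (by norm_num)
    have h2jt : ((2:ℝ≥0∞))^j ≠ ⊤ := pow_ne_top (by norm_num)
    have hinv : ((2:ℝ≥0∞)^j * t)⁻¹ = ((2:ℝ≥0∞)^j)⁻¹ * t⁻¹ :=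
      ENNReal.mul_inv (Or.inl h2j0) (Or.inl h2jt)
    have htinvH : t⁻¹ * H = V := by
      rw [ht, ENNReal.mul_inv (Or.inl (ENNReal.inv_ne_zero.2 hVt)) (Or.inl (ENNReal.inv_ne_top.2 hV0)),
        inv_inv, mul_assoc, ENNReal.inv_mul_cancel hH0 hHt, mul_one]
    have hsplit : ((2:ℝ≥0∞)^(j+1) * t)^θ = ((2:ℝ≥0∞)^θ)^(j+1) * t^θ := by
      rw [ENNReal.mul_rpow_of_nonneg _ _ hθ0.le, pow_rpow_comm]
    have hrsplit : r = (2:ℝ≥0∞)^θ * 2⁻¹ := by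
      rw [hr, show θ - 1 = θ + (-1) by ring, ENNReal.rpow_add θ (-1) (by norm_num) (by norm_num),
        ENNReal.rpow_neg_one]
    calc ((2:ℝ≥0∞)^(j+1) * t)^θ * ((2^j * t)⁻¹ * H)
        = (((2:ℝ≥0∞)^θ)^(j+1) * t^θ) * ((((2:ℝ≥0∞)^j)⁻¹ * t⁻¹) * H) := by
          rw [hsplit, hinv]
      _ = (((2:ℝ≥0∞)^θ)^(j+1) * t^θ) * (((2:ℝ≥0∞)⁻¹)^j * (t⁻¹ * H)) := by
          rw [ENNReal.inv_pow]
          ring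
      _ = (((2:ℝ≥0∞)^θ)^(j+1) * t^θ) * (((2:ℝ≥0∞)⁻¹)^j * V) := by rw [htinvH]
      _ = ((2:ℝ≥0∞)^θ * (t^θ * V)) * (((2:ℝ≥0∞)^θ)^j * ((2:ℝ≥0∞)⁻¹)^j) := by
          rw [pow_succ]
          ring
      _ = ((2:ℝ≥0∞)^θ * (t^θ * V)) * r^j := by rw [hrsplit, mul_pow]
  have step5 : ∑' j : ℕ, ((2:ℝ≥0∞)^θ * (t^θ * V)) * r^j
      = (2:ℝ≥0∞)^θ * (t^θ * V) * (1 - r)⁻¹ := by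
    rw [ENNReal.tsum_mul_left, ENNReal.tsum_geometric]
  calc ∫⁻ y in Q₀, (dyadicMaximalE φ y) ^ θ
      ≤ t^θ * V + ∑' j : ℕ, ∫⁻ y in Q₀,
        ({y : Fin n → ℝ | 2^j * t < dyadicMaximalE φ y}.indicator
          (fun _ => ((2:ℝ≥0∞)^(j+1) * t)^θ)) y := step1.trans (le_of_eq step2)
    _ ≤ t^θ * V + ∑' j : ℕ, ((2:ℝ≥0∞)^θ * (t^θ * V)) * r^j := by
        apply add_le_add_right
        apply ENNReal.tsum_le_tsum
        intro j
        rw [← step4 j]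
        exact step3 j
    _ = t^θ * V + (2:ℝ≥0∞)^θ * (t^θ * V) * (1 - r)⁻¹ := by rw [step5]
    _ = (1 + (2:ℝ≥0∞)^θ * (1 - r)⁻¹) * V * t ^ θ := by ring


lemma osc_le_twice {Q : Set (Fin n → ℝ)} (hQm : MeasurableSet Q) (hQt : volume Q ≠ ⊤)
    {v : (Fin n → ℝ) → ℝ} (hv : Measurable v) (c : ℝ) :
    ∫⁻ y in Q, (‖v y - ⨍ z in Q, v z‖₊ : ℝ≥0∞) ≤ 2 * ∫⁻ y in Q, (‖v y - c‖₊ : ℝ≥0∞) := by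
  by_cases htop : (∫⁻ y in Q, (‖v y - c‖₊ : ℝ≥0∞)) = ⊤
  · rw [htop]
    rw [ENNReal.mul_top (by norm_num)]
    exact le_top
  by_cases hQ0 : volume Q = 0
  · have : volume.restrict Q = 0 := Measure.restrict_eq_zero.2 hQ0
    rw [this]
    simp
  haveI : IsFiniteMeasure (volume.restrict Q) :=
    ⟨by rw [Measure.restrict_apply_univ]; exact lt_top_iff_ne_top.2 hQt⟩
  -- integrability
  have hvcI : Integrable (fun y => v y - c) (volume.restrict Q) := by
    constructor
    · exact (hv.sub measurable_const).aestronglyMeasurable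
    · rw [HasFiniteIntegral]
      exact lt_top_iff_ne_top.2 htop
  have hvI : Integrable v (volume.restrict Q) := by
    have : v = fun y => (v y - c) + c := by funext y; ring
    rw [this]
    exact hvcI.add (integrable_const c)
  set A := ⨍ z in Q, v z with hA
  have hAc : |A - c| ≤ (volume Q).toReal⁻¹ * ∫ y in Q, |v y - c| := by
    have h2 : (volume Q).toReal ≠ 0 := (ENNReal.toReal_pos hQ0 hQt).ne'
    have h1 : A - c = (volume Q).toReal⁻¹ * ∫ y in Q, (v y - c) := by
      rw [hA, setAverage_eq, integral_sub hvI (integrable_const c), integral_const,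
        measureReal_restrict_apply_univ, smul_eq_mul, smul_eq_mul, measureReal_def]
      field_simp
    rw [h1, abs_mul, abs_of_nonneg (inv_nonneg.2 ENNReal.toReal_nonneg)]
    apply mul_le_mul_of_nonneg_left _ (inv_nonneg.2 ENNReal.toReal_nonneg)
    simpa [Real.norm_eq_abs] using
      norm_integral_le_integral_norm (μ := volume.restrict Q) (fun y => v y - c)
  -- triangle
  have htri : ∀ y, (‖v y - A‖₊ : ℝ≥0∞) ≤ (‖v y - c‖₊ : ℝ≥0∞) + (‖c - A‖₊ : ℝ≥0∞) := by
    intro y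
    have : v y - A = (v y - c) + (c - A) := by ring
    rw [this]
    exact_mod_cast nnnorm_add_le _ _
  calc ∫⁻ y in Q, (‖v y - A‖₊ : ℝ≥0∞)
      ≤ ∫⁻ y in Q, ((‖v y - c‖₊ : ℝ≥0∞) + (‖c - A‖₊ : ℝ≥0∞)) := lintegral_mono htri
    _ = (∫⁻ y in Q, (‖v y - c‖₊ : ℝ≥0∞)) + (‖c - A‖₊ : ℝ≥0∞) * volume Q := by
        rw [lintegral_add_left (f := fun y => (‖v y - c‖₊ : ℝ≥0∞)) (hv.sub measurable_const).nnnorm.coe_nnreal_ennreal, MeasureTheory.setLIntegral_const]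
    _ ≤ (∫⁻ y in Q, (‖v y - c‖₊ : ℝ≥0∞)) + (∫⁻ y in Q, (‖v y - c‖₊ : ℝ≥0∞)) := by
        apply add_le_add_right
        have h3 : (‖c - A‖₊ : ℝ≥0∞) ≤ (volume Q)⁻¹ * ∫⁻ y in Q, (‖v y - c‖₊ : ℝ≥0∞) := by
          rw [← enorm_eq_nnnorm, Real.enorm_eq_ofReal_abs, abs_sub_comm]
          calc ENNReal.ofReal |A - c|
              ≤ ENNReal.ofReal ((volume Q).toReal⁻¹ * ∫ y in Q, |v y - c|) :=
                ENNReal.ofReal_le_ofReal hAc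
            _ = ENNReal.ofReal ((volume Q).toReal⁻¹) * ENNReal.ofReal (∫ y in Q, |v y - c|) :=
                ENNReal.ofReal_mul (inv_nonneg.2 ENNReal.toReal_nonneg)
            _ = (volume Q)⁻¹ * ∫⁻ y in Q, (‖v y - c‖₊ : ℝ≥0∞) := by
                congr 1
                · rw [ENNReal.ofReal_inv_of_pos (ENNReal.toReal_pos hQ0 hQt),
                    ENNReal.ofReal_toReal hQt]
                · have := ofReal_integral_norm_eq_lintegral_enorm hvcI
                  simpa [Real.norm_eq_abs, enorm_eq_nnnorm] using this
        calc (‖c - A‖₊ : ℝ≥0∞) * volume Q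
            ≤ ((volume Q)⁻¹ * ∫⁻ y in Q, (‖v y - c‖₊ : ℝ≥0∞)) * volume Q :=
              mul_le_mul_left h3 _
          _ = ((volume Q)⁻¹ * volume Q) * ∫⁻ y in Q, (‖v y - c‖₊ : ℝ≥0∞) := by ring
          _ = ∫⁻ y in Q, (‖v y - c‖₊ : ℝ≥0∞) := by
              rw [ENNReal.inv_mul_cancel hQ0 hQt, one_mul]
    _ = 2 * ∫⁻ y in Q, (‖v y - c‖₊ : ℝ≥0∞) := by ring


lemma ofReal_setAverage_le (k₀ : ℤ) (m₀ : Fin n → ℤ) (g : (Fin n → ℝ) → ℝ) :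
    ENNReal.ofReal (⨍ z in dyadicCube n k₀ m₀, g z) ≤
      davg n k₀ m₀ (fun z => (‖g z‖₊ : ℝ≥0∞)) := by
  set Q₀ := dyadicCube n k₀ m₀ with hQ₀
  have hQ0 : volume Q₀ ≠ 0 := (volume_dyadicCube_pos k₀ m₀).ne'
  have hQt : volume Q₀ ≠ ⊤ := volume_dyadicCube_ne_top k₀ m₀
  by_cases hInt : Integrable g (volume.restrict Q₀)
  · rw [setAverage_eq, smul_eq_mul]
    have h1 : (∫ z in Q₀, g z) ≤ ∫ z in Q₀, |g z| :=
      integral_mono hInt hInt.abs (fun z => le_abs_self _)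
    calc ENNReal.ofReal ((volume Q₀).toReal⁻¹ * ∫ z in Q₀, g z)
        ≤ ENNReal.ofReal ((volume Q₀).toReal⁻¹ * ∫ z in Q₀, |g z|) :=
          ENNReal.ofReal_le_ofReal
            (mul_le_mul_of_nonneg_left h1 (inv_nonneg.2 ENNReal.toReal_nonneg))
      _ = ENNReal.ofReal ((volume Q₀).toReal⁻¹) * ENNReal.ofReal (∫ z in Q₀, |g z|) :=
          ENNReal.ofReal_mul (inv_nonneg.2 ENNReal.toReal_nonneg)
      _ = (volume Q₀)⁻¹ * ∫⁻ z in Q₀, (‖g z‖₊ : ℝ≥0∞) := by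
          congr 1
          · rw [ENNReal.ofReal_inv_of_pos (ENNReal.toReal_pos hQ0 hQt),
              ENNReal.ofReal_toReal hQt]
          · have := ofReal_integral_norm_eq_lintegral_enorm hInt
            simpa [Real.norm_eq_abs, enorm_eq_nnnorm] using this
      _ = davg n k₀ m₀ (fun z => (‖g z‖₊ : ℝ≥0∞)) := rfl
  · rw [setAverage_eq, integral_undef hInt]
    simp

lemma abs_toReal_sub_le {W B NN : ℝ≥0∞} (hBt : B ≠ ⊤) (hlow : B ≤ W) (hup : W ≤ B + NN) :
    (‖W.toReal - B.toReal‖₊ : ℝ≥0∞) ≤ NN := by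
  by_cases hN : NN = ⊤
  · exact hN ▸ le_top
  have hBN : B + NN ≠ ⊤ := ENNReal.add_ne_top.2 ⟨hBt, hN⟩
  have hW : W ≠ ⊤ := fun h => hBN (eq_top_iff.2 (h ▸ hup))
  rw [← enorm_eq_nnnorm, Real.enorm_eq_ofReal_abs, abs_of_nonneg
    (sub_nonneg.2 ((ENNReal.toReal_le_toReal hBt hW).2 hlow))]
  have h1 : W.toReal ≤ B.toReal + NN.toReal := by
    rw [← ENNReal.toReal_add hBt hN]
    exact (ENNReal.toReal_le_toReal hW hBN).2 hup
  calc ENNReal.ofReal (W.toReal - B.toReal) ≤ ENNReal.ofReal (NN.toReal) :=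
        ENNReal.ofReal_le_ofReal (by linarith)
    _ = NN := ENNReal.ofReal_toReal hN

lemma le_dyadicSharpMaximal (g : (Fin n → ℝ) → ℝ) {k : ℤ} {m : Fin n → ℤ} {x : Fin n → ℝ}
    (hx : x ∈ dyadicCube n k m) :
    (volume (dyadicCube n k m))⁻¹ *
        (∫⁻ y in dyadicCube n k m, (‖g y - ⨍ z in dyadicCube n k m, g z‖₊ : ℝ≥0∞))
      ≤ dyadicSharpMaximal g x :=
  le_iSup₂_of_le k m (le_iSup_of_le hx le_rfl)

lemma dyadicSharpMaximal_le {g : (Fin n → ℝ) → ℝ} {x : Fin n → ℝ} {c : ℝ≥0∞}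
    (h : ∀ k m, x ∈ dyadicCube n k m →
      (volume (dyadicCube n k m))⁻¹ *
        (∫⁻ y in dyadicCube n k m, (‖g y - ⨍ z in dyadicCube n k m, g z‖₊ : ℝ≥0∞)) ≤ c) :
    dyadicSharpMaximal g x ≤ c :=
  iSup_le fun k => iSup_le fun m => iSup_le fun hx => h k m hx

lemma percube {θ : ℝ} (hθ0 : 0 < θ) (hθ1 : θ < 1) (k₀ : ℤ) (m₀ : Fin n → ℤ)
    (g : (Fin n → ℝ) → ℝ) (hgQ : 0 ≤ ⨍ z in dyadicCube n k₀ m₀, g z) :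
    (volume (dyadicCube n k₀ m₀))⁻¹ * ∫⁻ y in dyadicCube n k₀ m₀,
        (‖((dyadicMaximalE (fun z => (‖g z‖₊ : ℝ≥0∞)) y)^θ).toReal
          - ⨍ z in dyadicCube n k₀ m₀,
              ((dyadicMaximalE (fun w => (‖g w‖₊ : ℝ≥0∞)) z)^θ).toReal‖₊ : ℝ≥0∞)
      ≤ (2 * (1 + (2:ℝ≥0∞)^θ * (1 - (2:ℝ≥0∞)^(θ-1))⁻¹)) *
        ((volume (dyadicCube n k₀ m₀))⁻¹ * ∫⁻ y in dyadicCube n k₀ m₀,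
          (‖g y - ⨍ z in dyadicCube n k₀ m₀, g z‖₊ : ℝ≥0∞))^θ := by
  set Q₀ := dyadicCube n k₀ m₀ with hQ₀def
  set G : (Fin n → ℝ) → ℝ≥0∞ := fun z => (‖g z‖₊ : ℝ≥0∞) with hG
  set gQ : ℝ := ⨍ z in Q₀, g z with hgQdef
  set φ : (Fin n → ℝ) → ℝ≥0∞ := Q₀.indicator (fun y => (‖g y - gQ‖₊ : ℝ≥0∞)) with hφ
  set N : (Fin n → ℝ) → ℝ≥0∞ := dyadicMaximalE φ with hN
  set v : (Fin n → ℝ) → ℝ := fun y => ((dyadicMaximalE G y)^θ).toReal with hv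
  have hQ0 : volume Q₀ ≠ 0 := (volume_dyadicCube_pos k₀ m₀).ne'
  have hQt : volume Q₀ ≠ ⊤ := volume_dyadicCube_ne_top k₀ m₀
  have hφ0 : ∀ y, y ∉ Q₀ → φ y = 0 := fun y hy => Set.indicator_of_notMem hy _
  have hvmeas : Measurable v :=
    (ENNReal.continuous_rpow_const.measurable.comp (measurable_dyadicMaximalE G)).ennreal_toReal
  -- the constant A (supremum of averages over ancestors of Q₀)
  set A : ℝ≥0∞ := ⨆ (k : ℤ) (_ : k₀ ≤ k), davg n k (dmOf n k (dcorner n k₀ m₀)) G with hA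
  -- upper bound
  have claim1 : ∀ y ∈ Q₀, dyadicMaximalE G y ≤ max (ENNReal.ofReal gQ + N y) A := by
    intro y hyQ
    apply dyadicMaximalE_le
    intro k m hy
    by_cases hk : k₀ ≤ k
    · have hsub : Q₀ ⊆ dyadicCube n k m := dyadicCube_subset hk hyQ hy
      have hcm : m = dmOf n k (dcorner n k₀ m₀) :=
        mem_dyadicCube_iff.1 (hsub (dcorner_mem k₀ m₀))
      refine le_max_of_le_right ?_
      rw [hA, hcm]
      exact le_iSup₂_of_le k hk le_rfl
    · push_neg at hk
      have hsub : dyadicCube n k m ⊆ Q₀ := dyadicCube_subset hk.le hy hyQ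
      refine le_max_of_le_left ?_
      have hpt : ∀ z ∈ dyadicCube n k m, G z ≤ ENNReal.ofReal gQ + φ z := by
        intro z hz
        have h1 : (‖g z‖₊ : ℝ≥0∞) ≤ (‖gQ‖₊ : ℝ≥0∞) + (‖g z - gQ‖₊ : ℝ≥0∞) := by
          have e1 : gQ + (g z - gQ) = g z := by ring
          calc (‖g z‖₊ : ℝ≥0∞) = (‖gQ + (g z - gQ)‖₊ : ℝ≥0∞) := by rw [e1]
            _ ≤ _ := by exact_mod_cast nnnorm_add_le _ _
        have h2 : (‖gQ‖₊ : ℝ≥0∞) = ENNReal.ofReal gQ := by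
          rw [← enorm_eq_nnnorm, Real.enorm_eq_ofReal_abs, abs_of_nonneg hgQ]
        have h3 : φ z = (‖g z - gQ‖₊ : ℝ≥0∞) := Set.indicator_of_mem (hsub hz) _
        rw [h3, ← h2]
        exact h1
      calc davg n k m G
          ≤ davg n k m (fun z => ENNReal.ofReal gQ + φ z) := by
            rw [davg, davg]
            apply mul_le_mul_right
            apply setLIntegral_mono' (measurableSet_dyadicCube k m)
            exact hpt
        _ ≤ davg n k m (fun _ => ENNReal.ofReal gQ) + davg n k m φ :=
            davg_add_le k m _ _ aemeasurable_const
        _ ≤ ENNReal.ofReal gQ + N y := by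
            apply add_le_add
            · have h4 : davg n k m (fun _ : Fin n → ℝ => ENNReal.ofReal gQ)
                  = davg n k m (Set.univ.indicator (fun _ => ENNReal.ofReal gQ)) := by
                  apply congrArg
                  funext z
                  simp
              rw [h4]
              exact davg_indicator_const_le k m _ _
            · exact le_dyadicMaximalE hy φ
  -- lower bounds
  have claim2 : ∀ y ∈ Q₀, max (ENNReal.ofReal gQ) A ≤ dyadicMaximalE G y := by
    intro y hyQ
    apply max_le
    · exact (ofReal_setAverage_le k₀ m₀ g).trans (le_dyadicMaximalE hyQ G)
    · rw [hA]
      apply iSup_le; intro k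
      apply iSup_le; intro hk
      have hcc : dcorner n k₀ m₀ ∈ dyadicCube n k (dmOf n k (dcorner n k₀ m₀)) :=
        mem_dmOf _ _
      have hsub : Q₀ ⊆ dyadicCube n k (dmOf n k (dcorner n k₀ m₀)) :=
        dyadicCube_subset hk (dcorner_mem k₀ m₀) hcc
      exact le_dyadicMaximalE (hsub hyQ) G
  -- existence of a good constant
  have hc : ∃ c : ℝ, ∀ y ∈ Q₀, (‖v y - c‖₊ : ℝ≥0∞) ≤ (N y)^θ := by
    by_cases hAt : A = ⊤
    · refine ⟨0, fun y hyQ => ?_⟩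
      have h1 : dyadicMaximalE G y = ⊤ := by
        rw [eq_top_iff]
        refine le_trans ?_ (claim2 y hyQ)
        rw [hAt]
        exact le_max_right _ _
      have h2 : v y = 0 := by
        rw [hv]
        simp only [h1, ENNReal.top_rpow_of_pos hθ0, ENNReal.toReal_top]
      rw [h2]
      simp
    · set B : ℝ≥0∞ := max (ENNReal.ofReal gQ) A with hB
      have hBt : B ≠ ⊤ := by
        rw [hB]
        simp [hAt, ENNReal.ofReal_ne_top, max_eq_iff]
      have hBθt : B^θ ≠ ⊤ := ENNReal.rpow_ne_top_of_nonneg hθ0.le hBt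
      refine ⟨(B^θ).toReal, fun y hyQ => ?_⟩
      have hup : (dyadicMaximalE G y)^θ ≤ B^θ + (N y)^θ := by
        have h1 : dyadicMaximalE G y ≤ B + N y := by
          refine (claim1 y hyQ).trans ?_
          apply max_le
          · exact add_le_add_left (le_max_left _ _) _
          · exact le_add_right (le_max_right _ _)
        refine (ENNReal.rpow_le_rpow h1 hθ0.le).trans ?_
        exact ENNReal.rpow_add_le_add_rpow _ _ hθ0.le hθ1.le
      have hlow : B^θ ≤ (dyadicMaximalE G y)^θ :=
        ENNReal.rpow_le_rpow (claim2 y hyQ) hθ0.le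
      exact abs_toReal_sub_le hBθt hlow hup
  obtain ⟨c, hc⟩ := hc
  -- put everything together
  have kolm := kolmogorov (n := n) hθ0 hθ1 (k₀ := k₀) (m₀ := m₀) hφ0
  have osc := osc_le_twice (measurableSet_dyadicCube k₀ m₀) hQt hvmeas c
  have step : (∫⁻ y in Q₀, (‖v y - c‖₊ : ℝ≥0∞)) ≤ ∫⁻ y in Q₀, (N y)^θ := by
    apply setLIntegral_mono' (measurableSet_dyadicCube k₀ m₀)
    exact fun y hy => hc y hy
  have hφint : (∫⁻ y in Q₀, φ y) = ∫⁻ y in Q₀, (‖g y - gQ‖₊ : ℝ≥0∞) := by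
    apply setLIntegral_congr_fun_ae (measurableSet_dyadicCube k₀ m₀)
    filter_upwards with y hy
    rw [hφ, Set.indicator_of_mem hy]
  calc (volume Q₀)⁻¹ * ∫⁻ y in Q₀, (‖v y - ⨍ z in Q₀, v z‖₊ : ℝ≥0∞)
      ≤ (volume Q₀)⁻¹ * (2 * ∫⁻ y in Q₀, (‖v y - c‖₊ : ℝ≥0∞)) := mul_le_mul_right osc _
    _ ≤ (volume Q₀)⁻¹ * (2 * ∫⁻ y in Q₀, (N y)^θ) :=
        mul_le_mul_right (mul_le_mul_right step _) _
    _ ≤ (volume Q₀)⁻¹ * (2 * ((1 + (2:ℝ≥0∞)^θ * (1 - (2:ℝ≥0∞)^(θ-1))⁻¹) * volume Q₀ *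
          ((volume Q₀)⁻¹ * ∫⁻ y in Q₀, φ y) ^ θ)) :=
        mul_le_mul_right (mul_le_mul_right kolm _) _
    _ = ((volume Q₀)⁻¹ * volume Q₀) * (2 * (1 + (2:ℝ≥0∞)^θ * (1 - (2:ℝ≥0∞)^(θ-1))⁻¹)) *
          ((volume Q₀)⁻¹ * ∫⁻ y in Q₀, φ y) ^ θ := by ring
    _ = (2 * (1 + (2:ℝ≥0∞)^θ * (1 - (2:ℝ≥0∞)^(θ-1))⁻¹)) *
          ((volume Q₀)⁻¹ * ∫⁻ y in Q₀, (‖g y - gQ‖₊ : ℝ≥0∞)) ^ θ := by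
        rw [ENNReal.inv_mul_cancel hQ0 hQt, one_mul, hφint]


theorem dyadic_sharp_main (n : ℕ) (e0 e : ℝ)
    (h0 : 0 < e0) (h01 : e0 < e) (h1 : e < 1) :
    ∃ c : ℝ, 0 < c ∧
      ∀ f : (Fin n → ℝ) → ℝ, LocallyIntegrable f volume →
      ∀ x : Fin n → ℝ,
        dyadicSharpMaximalPow e0 (fun y => (dyadicMaximalPow e f y).toReal) x ≤
          ENNReal.ofReal c * dyadicSharpMaximalPow e f x := by
  have he : (0:ℝ) < e := h0.trans h01
  set θ : ℝ := e0 / e with hθ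
  have hθ0 : 0 < θ := div_pos h0 he
  have hθ1 : θ < 1 := (div_lt_one he).2 h01
  set K : ℝ≥0∞ := (2 * (1 + (2:ℝ≥0∞)^θ * (1 - (2:ℝ≥0∞)^(θ-1))⁻¹)) ^ (1/e0) with hK
  have hr1 : (2:ℝ≥0∞)^(θ-1) < 1 :=
    ENNReal.rpow_lt_one_of_one_lt_of_neg (by norm_num) (by linarith)
  have hKt : K ≠ ⊤ := by
    apply ENNReal.rpow_ne_top_of_nonneg (by positivity)
    apply ENNReal.mul_ne_top (by norm_num)
    apply ENNReal.add_ne_top.2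
    refine ⟨by norm_num, ENNReal.mul_ne_top
      (ENNReal.rpow_ne_top_of_nonneg hθ0.le (by norm_num)) ?_⟩
    rw [Ne, ENNReal.inv_eq_top]
    exact (tsub_pos_of_lt hr1).ne'
  have hc0 : (0:ℝ) < K.toReal + 1 := by
    have := ENNReal.toReal_nonneg (a := K)
    linarith
  refine ⟨K.toReal + 1, hc0, ?_⟩
  intro f _hf x
  have hfun : (fun y => |(dyadicMaximalPow e f y).toReal| ^ e0)
      = fun y => ((dyadicMaximalE (fun z => (‖|f z|^e‖₊ : ℝ≥0∞)) y)^θ).toReal := by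
    funext y
    simp only [dyadicMaximalPow, dyadicMaximal]
    rw [abs_of_nonneg ENNReal.toReal_nonneg, ENNReal.toReal_rpow, ← ENNReal.rpow_mul]
    congr 1
    rw [hθ]
    ring
  have main : dyadicSharpMaximal
        (fun y => ((dyadicMaximalE (fun z => (‖|f z|^e‖₊ : ℝ≥0∞)) y)^θ).toReal) x
      ≤ (2 * (1 + (2:ℝ≥0∞)^θ * (1 - (2:ℝ≥0∞)^(θ-1))⁻¹)) *
          (dyadicSharpMaximal (fun y => |f y|^e) x)^θ := by
    apply dyadicSharpMaximal_le
    intro k m hx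
    have hnn : 0 ≤ ⨍ z in dyadicCube n k m, |f z|^e := by
      rw [setAverage_eq, smul_eq_mul]
      apply mul_nonneg (inv_nonneg.2 ENNReal.toReal_nonneg)
      exact integral_nonneg fun z => Real.rpow_nonneg (abs_nonneg _) e
    refine le_trans (le_of_eq ?_) ((percube hθ0 hθ1 k m (fun y => |f y|^e) hnn).trans ?_)
    · rfl
    apply mul_le_mul_right
    exact ENNReal.rpow_le_rpow (le_dyadicSharpMaximal (fun y => |f y|^e) hx) hθ0.le
  simp only [dyadicSharpMaximalPow]
  rw [hfun]
  calc (dyadicSharpMaximal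
        (fun y => ((dyadicMaximalE (fun z => (‖|f z|^e‖₊ : ℝ≥0∞)) y)^θ).toReal) x) ^ (1/e0)
      ≤ ((2 * (1 + (2:ℝ≥0∞)^θ * (1 - (2:ℝ≥0∞)^(θ-1))⁻¹)) *
          (dyadicSharpMaximal (fun y => |f y|^e) x)^θ) ^ (1/e0) :=
        ENNReal.rpow_le_rpow main (by positivity)
    _ = K * ((dyadicSharpMaximal (fun y => |f y|^e) x)^θ)^(1/e0) := by
        rw [ENNReal.mul_rpow_of_nonneg _ _ (by positivity)]
    _ = K * (dyadicSharpMaximal (fun y => |f y|^e) x)^(1/e) := by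
        have hexp : θ * (1/e0) = 1/e := by
          rw [hθ]
          field_simp
        rw [← ENNReal.rpow_mul, hexp]
    _ ≤ ENNReal.ofReal (K.toReal + 1) * (dyadicSharpMaximal (fun y => |f y|^e) x)^(1/e) := by
        apply mul_le_mul_left
        calc K = ENNReal.ofReal K.toReal := (ENNReal.ofReal_toReal hKt).symm
          _ ≤ ENNReal.ofReal (K.toReal + 1) := ENNReal.ofReal_le_ofReal (by linarith)


end DyadicAux


/-- the pointwise estimate
`M^{#,d}_{ε₀}(M^d_ε f)(x) ≤ c M^{#,d}_ε f(x)` for `0 < ε₀ < ε < 1`. -/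
theorem dyadic_sharp_of_dyadic_maximal (n : ℕ) (e0 e : ℝ)
    (h0 : 0 < e0) (h01 : e0 < e) (h1 : e < 1) :
    ∃ c : ℝ, 0 < c ∧
      ∀ f : (Fin n → ℝ) → ℝ, LocallyIntegrable f volume →
      ∀ x : Fin n → ℝ,
        dyadicSharpMaximalPow e0 (fun y => (dyadicMaximalPow e f y).toReal) x ≤
          ENNReal.ofReal c * dyadicSharpMaximalPow e f x :=
  DyadicAux.dyadic_sharp_main n e0 e h0 h01 h1

end
end
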